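/- arXiv:1307.3757 — 13 statements merged into one kernel-verified Lean document; each statement's English description precedes it below -/
import Mathlib

section
/- Define f(ℓ) = 2^(2ℓ-1)·(2ℓ-1) / C(2ℓ, ℓ) for positive integers ℓ. Then for every integer ℓ ≥ 2, the sum over i from 1 to ℓ-1 of f(ℓ)/(f(i)·f(ℓ-i)) equals 4. -/
/-- f(ℓ) = 2^(2ℓ-1)·(2ℓ-1) / C(2ℓ, ℓ) -/
noncomputable def f (ℓ : ℕ) : ℝ :=
  (2 : ℝ) ^ (2 * ℓ - 1) * ((2 * ℓ - 1 : ℕ) : ℝ) / ((Nat.choose (2 * ℓ) ℓ : ℕ) : ℝ)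

/-!
Writing `C n` for the Catalan numbers, `C(2n+2, n+1) = 2(2n+1) C n`, so that `f (n + 1) = 4 ^ n / C n`.
The summand for `i = k + 1` is then `4 C k C (n - k) / C (n + 1)` when `ℓ = n + 2`, and the sum is `4`
by the Catalan recurrence `C (n + 1) = ∑ C k C (n - k)`.
-/

open Finset

lemma catalan_pos (n : ℕ) : 0 < catalan n :=
  Nat.pos_of_mul_pos_left ((succ_mul_catalan_eq_centralBinom n).symm ▸ n.centralBinom_pos)

lemma centralBinom_succ_eq_mul_catalan (n : ℕ) :
    (n + 1).centralBinom = 2 * (2 * n + 1) * catalan n :=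
  Nat.eq_of_mul_eq_mul_left n.succ_pos <| by
    rw [Nat.succ_mul_centralBinom_succ, ← succ_mul_catalan_eq_centralBinom, Nat.succ_eq_add_one]
    ring

lemma catalan_succ_eq_sum_range (n : ℕ) :
    catalan (n + 1) = ∑ k ∈ range (n + 1), catalan k * catalan (n - k) := by
  rw [catalan_succ, Fin.sum_univ_eq_sum_range (fun k => catalan k * catalan (n - k))]

lemma f_succ (n : ℕ) : f (n + 1) = 4 ^ n / catalan n := by
  have hn : 2 * (n + 1) - 1 = 2 * n + 1 := by omega
  rw [f, hn, ← Nat.centralBinom_eq_two_mul_choose, centralBinom_succ_eq_mul_catalan]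
  have := catalan_pos n
  push_cast
  rw [pow_succ, pow_mul]
  field_simp
  norm_num

lemma f_div_f_mul_f (i j : ℕ) :
    f (i + j + 2) / (f (i + 1) * f (j + 1)) = 4 * (catalan i * catalan j) / catalan (i + j + 1) := by
  have := catalan_pos i
  have := catalan_pos j
  have := catalan_pos (i + j + 1)
  rw [f_succ, f_succ, f_succ, pow_succ, pow_add]
  field_simp

theorem stmt_1 : ∀ ℓ : ℕ, 2 ≤ ℓ →
    ∑ i ∈ Finset.Ico 1 ℓ, f ℓ / (f i * f (ℓ - i)) = 4 := by
  intro ℓ hℓ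
  obtain ⟨n, rfl⟩ := Nat.exists_eq_add_of_le' hℓ
  have hterm : ∀ k ∈ range (n + 1), f (n + 2) / (f (1 + k) * f (n + 2 - (1 + k)))
      = 4 * (catalan k * catalan (n - k)) / catalan (n + 1) := by
    intro k hk
    obtain ⟨j, rfl⟩ := Nat.exists_eq_add_of_le (mem_range_succ_iff.mp hk)
    rw [show k + j + 2 - (1 + k) = j + 1 by omega, add_comm 1 k, Nat.add_sub_cancel_left]
    exact f_div_f_mul_f k j
  have hcat : ∑ k ∈ range (n + 1), (catalan k * catalan (n - k) : ℝ) = catalan (n + 1) := by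
    exact_mod_cast (catalan_succ_eq_sum_range n).symm
  have := catalan_pos (n + 1)
  rw [sum_Ico_eq_sum_range, show n + 2 - 1 = n + 1 by omega, sum_congr rfl hterm, ← sum_div,
    ← mul_sum, hcat]
  field_simp
end

section
/- There does not exist a function g : ℕ⁺ → ℝ and a constant 0 < C < 4 such that g(1) = 1, g(ℓ) ≥ 1 for all ℓ, and for every ℓ ≥ 2, the sum over i from 1 to ℓ-1 of g(ℓ)/(g(i)·g(ℓ-i)) is at most C. -/
/-!
With `a n = C ^ n / g (n + 1)` the hypothesis reads `a 0 = 1` and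
`∑_{i + j = n} a i * a j ≤ a (n + 1)`: `a` dominates the Catalan recursion, so `catalan n ≤ a n`.
As `g ≥ 1` this gives `catalan n ≤ C ^ n`, which fails for large `n` when `C < 4`, because
`4 ^ n < n * (n + 1) * catalan n`.
-/

open Finset Filter

theorem catalan_le_of_sum_antidiagonal_le {R : Type*} [CommSemiring R] [PartialOrder R]
    [IsOrderedRing R] {a : ℕ → R} (h0 : 1 ≤ a 0)
    (hsucc : ∀ n, ∑ p ∈ antidiagonal n, a p.1 * a p.2 ≤ a (n + 1)) (n : ℕ) :
    (catalan n : R) ≤ a n := by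
  induction n using Nat.strong_induction_on with
  | _ n ih =>
    rcases n with _ | n
    · simpa using h0
    calc (catalan (n + 1) : R)
        = ∑ p ∈ antidiagonal n, (catalan p.1 : R) * catalan p.2 := by
          rw [catalan_succ']; push_cast; rfl
      _ ≤ ∑ p ∈ antidiagonal n, a p.1 * a p.2 := by
          refine sum_le_sum fun p hp => ?_
          have hpn : p.1 + p.2 = n := mem_antidiagonal.mp hp
          have hp1 : p.1 < n + 1 := by omega
          have hp2 : p.2 < n + 1 := by omega
          exact mul_le_mul (ih _ hp1) (ih _ hp2) (Nat.cast_nonneg _)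
            ((Nat.cast_nonneg _).trans (ih _ hp1))
      _ ≤ a (n + 1) := hsucc n

theorem eventually_pow_lt_catalan {C : ℝ} (hC0 : 0 ≤ C) (hC4 : C < 4) :
    ∀ᶠ n in atTop, C ^ n < catalan n := by
  have hsmall : ∀ᶠ n : ℕ in atTop, (n : ℝ) ^ 2 * (C / 4) ^ n < 1 / 2 :=
    (tendsto_pow_const_mul_const_pow_of_lt_one 2 (by positivity) (by linarith)).eventually
      (eventually_lt_nhds (by norm_num))
  filter_upwards [hsmall, eventually_ge_atTop 4] with n hn hn4
  have hcentral : (4 : ℝ) ^ n < n * ((n + 1) * catalan n) := by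
    exact_mod_cast succ_mul_catalan_eq_centralBinom n ▸ Nat.four_pow_lt_mul_centralBinom n hn4
  have hn1 : (1 : ℝ) ≤ n := by exact_mod_cast (by omega : 1 ≤ n)
  have hnn : (0 : ℝ) < n * (n + 1) := by positivity
  have hpow : C ^ n = 4 ^ n * (C / 4) ^ n := by rw [← mul_pow]; ring_nf
  refine lt_of_mul_lt_mul_left ?_ hnn.le
  calc n * (n + 1) * C ^ n = 4 ^ n * (n * (n + 1) * (C / 4) ^ n) := by rw [hpow]; ring
    _ ≤ 4 ^ n * (2 * ((n : ℝ) ^ 2 * (C / 4) ^ n)) := by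
        have hquad : (n : ℝ) * (n + 1) ≤ 2 * n ^ 2 := by nlinarith
        have := mul_le_mul_of_nonneg_right hquad (by positivity : (0 : ℝ) ≤ (C / 4) ^ n)
        exact mul_le_mul_of_nonneg_left (by linarith) (by positivity)
    _ < 4 ^ n := by nlinarith [pow_pos (by norm_num : (0 : ℝ) < 4) n]
    _ < n * (n + 1) * catalan n := by linarith

theorem sum_Ico_one_eq_sum_antidiagonal {M : Type*} [AddCommMonoid M] (f : ℕ → ℕ → M) (n : ℕ) :
    ∑ i ∈ Ico 1 (n + 2), f i (n + 2 - i) = ∑ p ∈ antidiagonal n, f (p.1 + 1) (p.2 + 1) := by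
  rw [sum_Ico_eq_sum_range, Nat.sum_antidiagonal_eq_sum_range_succ_mk]
  refine sum_congr (by simp) fun i hi => ?_
  rw [mem_range] at hi
  congr 1 <;> omega

theorem sum_antidiagonal_pow_div_le {g : ℕ → ℝ} {C : ℝ} (hC : 0 ≤ C)
    (hg : ∀ ℓ, 1 ≤ ℓ → 0 < g ℓ) (n : ℕ)
    (hsum : ∑ i ∈ Ico 1 (n + 2), g (n + 2) / (g i * g (n + 2 - i)) ≤ C) :
    ∑ p ∈ antidiagonal n, C ^ p.1 / g (p.1 + 1) * (C ^ p.2 / g (p.2 + 1)) ≤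
      C ^ (n + 1) / g (n + 2) := by
  rw [sum_Ico_one_eq_sum_antidiagonal (fun i j => g (n + 2) / (g i * g j))] at hsum
  have hgn : 0 < g (n + 2) := hg _ (by omega)
  calc ∑ p ∈ antidiagonal n, C ^ p.1 / g (p.1 + 1) * (C ^ p.2 / g (p.2 + 1))
      = C ^ n / g (n + 2) * ∑ p ∈ antidiagonal n, g (n + 2) / (g (p.1 + 1) * g (p.2 + 1)) := by
        rw [mul_sum]
        refine sum_congr rfl fun p hp => ?_
        rw [← mem_antidiagonal.mp hp, pow_add]
        have := hg (p.1 + 1) (by omega)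
        have := hg (p.2 + 1) (by omega)
        have := hg (p.1 + p.2 + 2) (by omega)
        field_simp
    _ ≤ C ^ n / g (n + 2) * C := by gcongr
    _ = C ^ (n + 1) / g (n + 2) := by ring

theorem stmt_3 : ¬ ∃ (g : ℕ → ℝ) (C : ℝ), 0 < C ∧ C < 4 ∧
    g 1 = 1 ∧ (∀ ℓ : ℕ, 1 ≤ ℓ → 1 ≤ g ℓ) ∧
    (∀ ℓ : ℕ, 2 ≤ ℓ → ∑ i ∈ Finset.Ico 1 ℓ, g ℓ / (g i * g (ℓ - i)) ≤ C) := by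
  rintro ⟨g, C, hC0, hC4, hg1, hg, hsum⟩
  have hgpos : ∀ ℓ, 1 ≤ ℓ → 0 < g ℓ := fun ℓ hℓ => one_pos.trans_le (hg ℓ hℓ)
  have hcatalan (n : ℕ) : (catalan n : ℝ) ≤ C ^ n / g (n + 1) :=
    catalan_le_of_sum_antidiagonal_le (a := fun n => C ^ n / g (n + 1)) (by norm_num [hg1])
      (fun n => sum_antidiagonal_pow_div_le hC0.le hgpos n (hsum (n + 2) (by omega))) n
  obtain ⟨n, hn⟩ := (eventually_pow_lt_catalan hC0.le hC4).exists
  have : C ^ n / g (n + 1) ≤ C ^ n := div_le_self (by positivity) (hg _ (by omega))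
  linarith [hcatalan n]
end

section
/- Let f : ℕ⁺ → ℝ satisfy f(1) = 1, f(ℓ) ≥ 1 for all ℓ, and for all ℓ ≥ 2, Σ_{i=1}^{ℓ-1} f(ℓ)/(f(i)f(ℓ-i)) ≤ 4. Let T be a finite tree with ℓ vertices, let P be a path in T with edges h₁,…,h_k, and let c assign a nonnegative length to each edge. For an edge e of T, let ℓ_e and ℓ_e' be the numbers of vertices in the two components of T minus e. Then there exists an edge h on P such that c(P) ≤ 4·c(h)·f(ℓ_h)·f(ℓ_h')/f(ℓ), where c(P) is the total length of P. -/
/-!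
Orient `P` as a sequence of darts `d₁, …, d_k`. In a tree, the component of the tail of `dᵢ` after
deleting `dᵢ` is strictly contained in the component of the tail of `dᵢ₊₁` after deleting `dᵢ₊₁`,
so the sizes `ℓ_{dᵢ}` are distinct elements of `[1, ℓ - 1]`. By the hypothesis on `f`, the weights
`f ℓ / (4 f(ℓ_h) f(ℓ - ℓ_h))` of the edges `h` of `P` therefore sum to at most `1`, and some edge
`h` carries at least its weighted share of `c(P)`.
-/

namespace List

theorem exists_sum_le_div_of_sum_le_one {ι : Type*} {l : List ι} (hl : l ≠ []) {c w : ι → ℝ}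
    (hc : ∀ i ∈ l, 0 ≤ c i) (hw₀ : ∀ i ∈ l, 0 < w i) (hw : (l.map w).sum ≤ 1) :
    ∃ i ∈ l, (l.map c).sum ≤ c i / w i := by
  by_contra! h
  have hlt := sum_lt_sum_of_ne_nil hl c (fun i => (l.map c).sum * w i) fun i hi =>
    (div_lt_iff₀ (hw₀ i hi)).mp (h i hi)
  rw [sum_map_mul_left] at hlt
  have hC : 0 ≤ (l.map c).sum := sum_nonneg fun x hx => by
    obtain ⟨i, hi, rfl⟩ := mem_map.mp hx
    exact hc i hi
  nlinarith

theorem Nodup.sum_map_le_sum {ι M : Type*} [AddCommMonoid M] [PartialOrder M]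
    [IsOrderedAddMonoid M] {l : List ι} (hl : l.Nodup) {s : Finset ι} (hls : ∀ i ∈ l, i ∈ s)
    {g : ι → M} (hg : ∀ i ∈ s, 0 ≤ g i) : (l.map g).sum ≤ ∑ i ∈ s, g i := by
  classical
  rw [← sum_toFinset g hl]
  exact Finset.sum_le_sum_of_subset_of_nonneg (fun i hi => hls i (mem_toFinset.mp hi))
    fun i hi _ => hg i hi

theorem Nodup.sum_map_div_le_one {f : ℕ → ℝ} {ℓ : ℕ} (hf : ∀ i, 1 ≤ i → 0 ≤ f i)
    (hfsum : ∑ i ∈ Finset.Ico 1 ℓ, f ℓ / (f i * f (ℓ - i)) ≤ 4) {l : List ℕ} (hl : l.Nodup)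
    (hlℓ : ∀ i ∈ l, i ∈ Finset.Ico 1 ℓ) : (l.map fun i => f ℓ / (f i * f (ℓ - i)) / 4).sum ≤ 1 := by
  refine (hl.sum_map_le_sum hlℓ fun i hi => ?_).trans ?_
  · rw [Finset.mem_Ico] at hi
    have := hf i hi.1
    have := hf (ℓ - i) (by omega)
    have := hf ℓ (by omega)
    positivity
  · rw [← Finset.sum_div]
    linarith

theorem exists_sum_le_four_mul_div {f : ℕ → ℝ} (hf : ∀ ℓ, 1 ≤ ℓ → 0 < f ℓ)
    (hfsum : ∀ ℓ, 2 ≤ ℓ → ∑ i ∈ Finset.Ico 1 ℓ, f ℓ / (f i * f (ℓ - i)) ≤ 4) {ℓ : ℕ}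
    {ι : Type*} {l : List ι} (hl : l ≠ []) {c : ι → ℝ} (hc : ∀ i ∈ l, 0 ≤ c i) {n : ι → ℕ}
    (hn : (l.map n).Nodup) (hnℓ : ∀ i ∈ l, n i ∈ Finset.Ico 1 ℓ) :
    ∃ i ∈ l, (l.map c).sum ≤ 4 * c i * f (n i) * f (ℓ - n i) / f ℓ := by
  have hw₀ : ∀ i ∈ l, 0 < f ℓ / (f (n i) * f (ℓ - n i)) / 4 := fun i hi => by
    have := Finset.mem_Ico.mp (hnℓ i hi)
    have := hf (n i) this.1
    have := hf (ℓ - n i) (by omega)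
    have := hf ℓ (by omega)
    positivity
  have hw : (l.map fun i => f ℓ / (f (n i) * f (ℓ - n i)) / 4).sum ≤ 1 := by
    obtain ⟨i₀, hi₀⟩ := exists_mem_of_ne_nil l hl
    have hℓ := Finset.mem_Ico.mp (hnℓ i₀ hi₀)
    have := hn.sum_map_div_le_one (fun k hk => (hf k hk).le) (hfsum ℓ (by omega)) fun k hk => by
      obtain ⟨i, hi, rfl⟩ := mem_map.mp hk
      exact hnℓ i hi
    rwa [map_map] at this
  obtain ⟨i, hi, hle⟩ := exists_sum_le_div_of_sum_le_one hl hc hw₀ hw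
  refine ⟨i, hi, hle.trans_eq ?_⟩
  rw [div_div, div_div_eq_mul_div]
  ring

end List

namespace SimpleGraph

variable {V : Type*} {G : SimpleGraph V} {u v w x y z : V}

/-- For an endpoint `x` of `e`, the paper's `ℓ_e` is the `ncard` of this set. -/
def edgeSide (G : SimpleGraph V) (e : Sym2 V) (x : V) : Set V :=
  {w | (G.deleteEdges {e}).Reachable x w}

theorem self_mem_edgeSide (e : Sym2 V) (x : V) : x ∈ G.edgeSide e x :=
  Reachable.refl x

theorem ncard_edgeSide_pos [Finite V] (e : Sym2 V) (x : V) : 0 < (G.edgeSide e x).ncard :=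
  (Set.ncard_pos (Set.toFinite _)).mpr ⟨x, self_mem_edgeSide e x⟩

theorem Reachable.deleteEdges_of_not_reachable (h : G.Reachable x w) (hy : ¬G.Reachable x y) :
    (G.deleteEdges {s(y, z)}).Reachable x w := by
  classical
  obtain ⟨p⟩ := h
  refine ⟨p.toDeleteEdges {s(y, z)} fun e he hes => hy ?_⟩
  rw [Set.mem_singleton_iff] at hes
  subst hes
  exact ⟨p.takeUntil y (p.fst_mem_support_of_mem_edges he)⟩

theorem Reachable.reachable_deleteEdges_or (h : G.Reachable x w) :
    (G.deleteEdges {s(x, y)}).Reachable x w ∨ (G.deleteEdges {s(x, y)}).Reachable y w := by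
  obtain ⟨p⟩ := h.symm
  clear h
  induction p with
  | nil => exact Or.inl .rfl
  | @cons a b x hab q ih =>
    by_cases he : s(a, b) = s(x, y)
    · rcases Sym2.mem_iff.mp (he ▸ Sym2.mem_mk_left a b) with rfl | rfl
      · exact Or.inl .rfl
      · exact Or.inr .rfl
    · have hba : (G.deleteEdges {s(x, y)}).Adj b a := deleteEdges_adj.mpr ⟨hab.symm, by
        rw [Set.mem_singleton_iff, Sym2.eq_swap]
        exact he⟩
      exact ih.imp (·.trans hba.reachable) (·.trans hba.reachable)

theorem compl_edgeSide (hG : G.Preconnected) (hb : G.IsBridge s(x, y)) :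
    (G.edgeSide s(x, y) x)ᶜ = G.edgeSide s(x, y) y := by
  ext w
  exact ⟨fun hx => ((hG x w).reachable_deleteEdges_or).resolve_left hx,
    fun hy hx => hb (hx.trans hy.symm)⟩

theorem ncard_edgeSide_add_ncard_edgeSide [Finite V] (hG : G.Preconnected)
    (hb : G.IsBridge s(x, y)) :
    (G.edgeSide s(x, y) x).ncard + (G.edgeSide s(x, y) y).ncard = Nat.card V := by
  rw [← compl_edgeSide hG hb]
  exact Set.ncard_add_ncard_compl _

theorem ncard_edgeSide_lt [Finite V] (hG : G.Preconnected) (hb : G.IsBridge s(x, y)) :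
    (G.edgeSide s(x, y) x).ncard < Nat.card V := by
  have := ncard_edgeSide_add_ncard_edgeSide hG hb
  have := ncard_edgeSide_pos (G := G) s(x, y) y
  omega

theorem ncard_edgeSide_right [Finite V] (hG : G.Preconnected) (hb : G.IsBridge s(x, y)) :
    (G.edgeSide s(x, y) y).ncard = Nat.card V - (G.edgeSide s(x, y) x).ncard := by
  have := ncard_edgeSide_add_ncard_edgeSide hG hb
  omega

theorem edgeSide_ssubset_edgeSide (hb : G.IsBridge s(x, y)) (hxy : G.Adj x y) (hxz : x ≠ z) :
    G.edgeSide s(x, y) x ⊂ G.edgeSide s(y, z) y := by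
  refine Set.ssubset_iff_of_subset (fun w hw => ?_) |>.mpr
    ⟨y, self_mem_edgeSide _ y, fun hy => hb hy⟩
  have hyx : (G.deleteEdges {s(y, z)}).Adj y x := deleteEdges_adj.mpr ⟨hxy.symm, by
    rw [Set.mem_singleton_iff, Sym2.congr_right]
    exact hxz⟩
  have hxw : (G.deleteEdges {s(y, z)}).Reachable x w := by
    refine (Reachable.deleteEdges_of_not_reachable (y := y) (z := z) hw hb).mono ?_
    rw [deleteEdges_deleteEdges]
    exact deleteEdges_anti Set.subset_union_right
  exact hyx.reachable.trans hxw

theorem Walk.IsPath.isChain_edgeSide (hG : G.IsAcyclic) {p : G.Walk u v} (hp : p.IsPath) :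
    p.darts.IsChain fun d d' => G.edgeSide d.edge d.fst ⊂ G.edgeSide d'.edge d'.fst := by
  induction p with
  | nil => exact List.isChain_nil
  | cons h q ih =>
    cases q with
    | nil => exact List.isChain_singleton _
    | cons h' r =>
      rw [Walk.darts_cons, Walk.darts_cons, List.isChain_cons_cons]
      refine ⟨edgeSide_ssubset_edgeSide (isAcyclic_iff_forall_adj_isBridge.mp hG h) h ?_,
        ih hp.of_cons⟩
      rintro rfl
      exact ((Walk.cons_isPath_iff h _).mp hp).2 (List.mem_cons_of_mem _ r.start_mem_support)

theorem Walk.IsPath.pairwise_ncard_edgeSide [Finite V] (hG : G.IsAcyclic) {p : G.Walk u v}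
    (hp : p.IsPath) :
    (p.darts.map fun d => (G.edgeSide d.edge d.fst).ncard).Pairwise (· < ·) := by
  refine List.isChain_iff_pairwise.mp ?_
  rw [List.isChain_map]
  exact (hp.isChain_edgeSide hG).imp fun _ _ h => Set.ncard_lt_ncard h

end SimpleGraph

theorem stmt_5_general (V : Type*) [Fintype V]
    (G : SimpleGraph V) (hG : G.IsTree)
    (c : Sym2 V → ℝ) (hc : ∀ e, 0 ≤ c e)
    (f : ℕ → ℝ) (hfge : ∀ ℓ : ℕ, 1 ≤ ℓ → 1 ≤ f ℓ)
    (hfsum : ∀ ℓ : ℕ, 2 ≤ ℓ → ∑ i ∈ Finset.Ico 1 ℓ, f ℓ / (f i * f (ℓ - i)) ≤ 4)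
    (u v : V) (P : G.Walk u v) (hP : P.IsPath) (hne : P.edges ≠ []) :
    ∃ a b : V, G.Adj a b ∧ s(a, b) ∈ P.edges ∧
      (P.edges.map c).sum ≤
        4 * c s(a, b)
          * f ({w | (G.deleteEdges {s(a, b)}).Reachable a w}.ncard)
          * f ({w | (G.deleteEdges {s(a, b)}).Reachable b w}.ncard)
          / f (Fintype.card V) := by
  have hpre := hG.connected.preconnected
  have hb (d : G.Dart) : G.IsBridge s(d.fst, d.snd) :=
    SimpleGraph.isAcyclic_iff_forall_adj_isBridge.mp hG.isAcyclic d.adj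
  have hcard : Nat.card V = Fintype.card V := Nat.card_eq_fintype_card
  have hsize (d : G.Dart) : (G.edgeSide d.edge d.fst).ncard ∈ Finset.Ico 1 (Fintype.card V) :=
    Finset.mem_Ico.mpr ⟨G.ncard_edgeSide_pos _ _, hcard ▸ G.ncard_edgeSide_lt hpre (hb d)⟩
  obtain ⟨d, hd, hle⟩ := List.exists_sum_le_four_mul_div (c := fun d => c d.edge)
    (fun ℓ hℓ => one_pos.trans_le (hfge ℓ hℓ)) hfsum (by simpa [SimpleGraph.Walk.edges] using hne)
    (fun _ _ => hc _) ((hP.pairwise_ncard_edgeSide hG.isAcyclic).imp ne_of_lt) fun d _ => hsize d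
  refine ⟨d.fst, d.snd, d.adj, List.mem_map_of_mem hd, ?_⟩
  have hright : Fintype.card V - (G.edgeSide d.edge d.fst).ncard =
      (G.edgeSide s(d.fst, d.snd) d.snd).ncard := by
    rw [G.ncard_edgeSide_right hpre (hb d), hcard]
    rfl
  calc (P.edges.map c).sum = (P.darts.map fun d => c d.edge).sum := by
        rw [SimpleGraph.Walk.edges, List.map_map]
        rfl
    _ ≤ _ := hle
    _ = _ := by rw [hright]; rfl

theorem stmt_5 (V : Type*) [Fintype V] [DecidableEq V]
    (G : SimpleGraph V) (hG : G.IsTree)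
    (c : Sym2 V → ℝ) (hc : ∀ e, 0 ≤ c e)
    (f : ℕ → ℝ) (hf1 : f 1 = 1) (hfge : ∀ ℓ : ℕ, 1 ≤ ℓ → 1 ≤ f ℓ)
    (hfsum : ∀ ℓ : ℕ, 2 ≤ ℓ → ∑ i ∈ Finset.Ico 1 ℓ, f ℓ / (f i * f (ℓ - i)) ≤ 4)
    (u v : V) (P : G.Walk u v) (hP : P.IsPath) (hne : P.edges ≠ []) :
    ∃ a b : V, G.Adj a b ∧ s(a, b) ∈ P.edges ∧
      (P.edges.map c).sum ≤
        4 * c s(a, b)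
          * f ({w | (G.deleteEdges {s(a, b)}).Reachable a w}.ncard)
          * f ({w | (G.deleteEdges {s(a, b)}).Reachable b w}.ncard)
          / f (Fintype.card V) :=
  stmt_5_general V G hG c hc f hfge hfsum u v P hP hne
end

section
/- Let T* be a minimum spanning tree of a finite weighted graph with edge costs c, and T any other spanning tree of the same graph. Then there exists a bijection ψ from the edges of T* to the edges of T such that for every edge e of T*, (T* ∪ {ψ(e)}) \ {e} is a spanning tree, and consequently the product of the edge costs of T* is at most the product of the edge costs of T (assuming all costs are positive). -/
/-!
For `e ∈ T* \ T` there is an `f ∈ T \ T*` that can be swapped both ways: `e` separates `T*`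
into two sides, and the path of `T` between the ends of `e` has an edge `f` crossing them;
then `T* - e + f` is a tree, and so is `T - f + e` because `f` lies on the unique `T`-path
between the ends of `e`. Replacing `T` by `T - f + e` brings it one edge closer to `T*`, so
recursion on `|T \ T*|` yields the bijection `ψ`, fixing the common edges. Minimality of `T*`
against each tree `T* - e + ψ e` gives `c e ≤ c (ψ e)`, and the products compare factorwise.
-/

open SimpleGraph Finset

namespace Finset

variable {α : Type*} [DecidableEq α] {s : Finset α} {a b : α}

lemma notMem_erase_of_card_insert_erase (ha : a ∈ s) (h : #(insert b (s.erase a)) = #s) :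
    b ∉ s.erase a := fun hb => by
  rw [insert_eq_of_mem hb, card_erase_of_mem ha] at h
  have := card_pos.mpr ⟨a, ha⟩
  omega

lemma le_of_sum_le_sum_insert_erase {β : Type*} [AddCommGroup β] [PartialOrder β]
    [IsOrderedAddMonoid β] {c : α → β} (ha : a ∈ s) (hb : b ∉ s.erase a)
    (h : ∑ x ∈ s, c x ≤ ∑ x ∈ insert b (s.erase a), c x) : c a ≤ c b := by
  rwa [sum_insert hb, ← add_sum_erase s c ha, add_le_add_iff_right] at h

lemma prod_le_prod_of_equiv {ι κ R : Type*} [CommMonoidWithZero R] [PartialOrder R]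
    [ZeroLEOneClass R] [PosMulMono R] {s : Finset ι} {t : Finset κ} (ψ : s ≃ t) {f : ι → R}
    {g : κ → R} (hf : ∀ i ∈ s, 0 ≤ f i) (h : ∀ i : s, f i ≤ g (ψ i)) :
    ∏ i ∈ s, f i ≤ ∏ j ∈ t, g j := by
  rw [← prod_coe_sort s, ← prod_coe_sort t, ← Equiv.prod_comp ψ]
  exact prod_le_prod (fun i _ => hf i i.2) fun i _ => h i

end Finset

namespace SimpleGraph

variable {V : Type*}

lemma Connected.reachable_deleteEdges_or {H : SimpleGraph V} (hH : H.Connected) (u v w : V) :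
    (H.deleteEdges {s(u, v)}).Reachable w u ∨ (H.deleteEdges {s(u, v)}).Reachable w v := by
  by_contra! ⟨hu, hv⟩
  obtain ⟨p⟩ := hH.preconnected w u
  obtain ⟨d, -, hd₁, hd₂⟩ := p.exists_boundary_dart {x | (H.deleteEdges {s(u, v)}).Reachable w x}
    (Reachable.refl w) hu
  have hd : s(d.fst, d.snd) = s(u, v) := by
    by_contra hne
    exact hd₂ (hd₁.trans (deleteEdges_adj.mpr ⟨d.adj, hne⟩).reachable)
  rcases Sym2.eq_iff.mp hd with ⟨h, -⟩ | ⟨h, -⟩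
  · exact hu (h ▸ hd₁)
  · exact hv (h ▸ hd₁)

lemma IsAcyclic.not_reachable_deleteEdges_of_mem_edges {H : SimpleGraph V} (hH : H.IsAcyclic)
    {u v : V} {p : H.Walk u v} (hp : p.IsPath) {f : Sym2 V} (hf : f ∈ p.edges) :
    ¬ (H.deleteEdges {f}).Reachable u v := by
  classical
  rintro ⟨q⟩
  have hpq : p = q.bypass.mapLe (deleteEdges_le _) := congrArg Subtype.val
    ((hH.subsingleton_path u v).elim ⟨p, hp⟩ ⟨_, q.bypass_isPath.mapLe _⟩)
  rw [hpq, Walk.edges_mapLe_eq_edges] at hf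
  simpa [edgeSet_deleteEdges] using q.bypass.edges_subset_edgeSet hf

-- `fromEdgeSet` drops loops, hence the `¬ e.IsDiag` hypotheses below.
local notation "⟪" E "⟫" => fromEdgeSet (↑E : Set (Sym2 V))

variable {E : Finset (Sym2 V)}

lemma edgeSet_fromEdgeSet_coe_finset (hE : ∀ e ∈ E, ¬ e.IsDiag) : ⟪E⟫.edgeSet = E := by
  rw [edgeSet_fromEdgeSet, sdiff_eq_left, Set.disjoint_left]
  exact hE

section Fintype

variable [Fintype V]

lemma isTree_fromEdgeSet_coe_finset_iff (hE : ∀ e ∈ E, ¬ e.IsDiag) :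
    ⟪E⟫.IsTree ↔ ⟪E⟫.Connected ∧ #E + 1 = Fintype.card V := by
  rw [isTree_iff_connected_and_card, edgeSet_fromEdgeSet_coe_finset hE, Nat.card_coe_set_eq,
    Set.ncard_coe_finset, Nat.card_eq_fintype_card]

lemma card_eq_of_isTree_fromEdgeSet {E' : Finset (Sym2 V)} (hE : ∀ e ∈ E, ¬ e.IsDiag)
    (hE' : ∀ e ∈ E', ¬ e.IsDiag) (hT : ⟪E⟫.IsTree) (hT' : ⟪E'⟫.IsTree) : #E = #E' := by
  have := ((isTree_fromEdgeSet_coe_finset_iff hE).mp hT).2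
  have := ((isTree_fromEdgeSet_coe_finset_iff hE').mp hT').2
  omega

end Fintype

variable [DecidableEq V]

lemma fromEdgeSet_coe_erase (E : Finset (Sym2 V)) (f : Sym2 V) :
    ⟪E.erase f⟫ = ⟪E⟫.deleteEdges {f} := by
  rw [deleteEdges_fromEdgeSet, coe_erase]

lemma IsTree.not_reachable_fromEdgeSet_erase (hT : ⟪E⟫.IsTree) {u v : V} (he : s(u, v) ∈ E)
    (huv : u ≠ v) : ¬ ⟪E.erase s(u, v)⟫.Reachable u v := by
  rw [fromEdgeSet_coe_erase, ← isBridge_iff]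
  exact isAcyclic_iff_forall_adj_isBridge.mp hT.isAcyclic ((fromEdgeSet_adj _).mpr ⟨he, huv⟩)

variable [Fintype V]

lemma IsTree.isTree_insert_erase (hE : ∀ e ∈ E, ¬ e.IsDiag) (hT : ⟪E⟫.IsTree) {f : Sym2 V}
    (hf : f ∈ E) {u v : V} (huv : ¬ ⟪E.erase f⟫.Reachable u v) :
    ⟪insert s(u, v) (E.erase f)⟫.IsTree := by
  induction f using Sym2.ind with | _ a b => ?_
  have hside : ∀ w, ⟪E.erase s(a, b)⟫.Reachable w a ∨ ⟪E.erase s(a, b)⟫.Reachable w b := by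
    rw [fromEdgeSet_coe_erase]; exact hT.connected.reachable_deleteEdges_or a b
  -- `u` and `v` lie on different sides of `s(a, b)`, so every vertex reaches one of them.
  have hreach : ∀ w, ⟪E.erase s(a, b)⟫.Reachable w u ∨ ⟪E.erase s(a, b)⟫.Reachable w v := by
    intro w
    rcases hside w with hw | hw <;> rcases hside u with hu | hu <;> rcases hside v with hv | hv <;>
      first
        | exact absurd (hu.trans hv.symm) huv
        | exact Or.inl (hw.trans hu.symm)
        | exact Or.inr (hw.trans hv.symm)
  have hne : u ≠ v := by rintro rfl; exact huv (Reachable.refl u)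
  have hnotMem : s(u, v) ∉ E.erase s(a, b) :=
    fun h => huv ((fromEdgeSet_adj _).mpr ⟨h, hne⟩).reachable
  have hle : ⟪E.erase s(a, b)⟫ ≤ ⟪insert s(u, v) (E.erase s(a, b))⟫ :=
    fromEdgeSet_mono (by simp [Set.subset_insert])
  have hadj : ⟪insert s(u, v) (E.erase s(a, b))⟫.Adj u v := (fromEdgeSet_adj _).mpr ⟨by simp, hne⟩
  have hE' : ∀ e ∈ insert s(u, v) (E.erase s(a, b)), ¬ e.IsDiag := by
    simpa [hne] using fun e _ he => hE e he
  refine (isTree_fromEdgeSet_coe_finset_iff hE').mpr ⟨?_, ?_⟩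
  · refine (connected_iff_exists_forall_reachable _).mpr ⟨u, fun w => ?_⟩
    rcases hreach w with hw | hw
    · exact (hw.mono hle).symm
    · exact hadj.reachable.trans (hw.mono hle).symm
  · rw [card_insert_of_notMem hnotMem, card_erase_add_one hf]
    exact ((isTree_fromEdgeSet_coe_finset_iff hE).mp hT).2

lemma IsTree.exists_symm_exchange {E₁ E₂ : Finset (Sym2 V)} (hE₁ : ∀ e ∈ E₁, ¬ e.IsDiag)
    (hE₂ : ∀ e ∈ E₂, ¬ e.IsDiag) (hT₁ : ⟪E₁⟫.IsTree) (hT₂ : ⟪E₂⟫.IsTree) {e : Sym2 V}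
    (he₁ : e ∈ E₁) (he₂ : e ∉ E₂) :
    ∃ f ∈ E₂, f ∉ E₁ ∧ ⟪insert f (E₁.erase e)⟫.IsTree ∧ ⟪insert e (E₂.erase f)⟫.IsTree := by
  induction e using Sym2.ind with | _ u v => ?_
  have huv : ¬ ⟪E₁.erase s(u, v)⟫.Reachable u v :=
    hT₁.not_reachable_fromEdgeSet_erase he₁ fun h => hE₁ _ he₁ (Sym2.mk_isDiag_iff.mpr h)
  obtain ⟨p, hp, -⟩ := hT₂.existsUnique_path u v
  obtain ⟨d, hd, hd₁, hd₂⟩ :=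
    p.exists_boundary_dart {x | ⟪E₁.erase s(u, v)⟫.Reachable u x} (Reachable.refl u) huv
  obtain ⟨hf₂, hne⟩ := (fromEdgeSet_adj _).mp d.adj
  have hab : ¬ ⟪E₁.erase s(u, v)⟫.Reachable d.fst d.snd := fun h => hd₂ (hd₁.trans h)
  have hf₁ : s(d.fst, d.snd) ∉ E₁ := fun h => hab (Adj.reachable <| (fromEdgeSet_adj _).mpr
    ⟨mem_erase.mpr ⟨fun h' => he₂ (h' ▸ hf₂), h⟩, hne⟩)
  refine ⟨_, hf₂, hf₁, hT₁.isTree_insert_erase hE₁ he₁ hab, hT₂.isTree_insert_erase hE₂ hf₂ ?_⟩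
  rw [fromEdgeSet_coe_erase]
  exact hT₂.isAcyclic.not_reachable_deleteEdges_of_mem_edges hp
    (List.mem_map_of_mem (f := Dart.edge) hd)

theorem IsTree.exists_equiv_isTree_insert_erase {E₁ : Finset (Sym2 V)}
    (hE₁ : ∀ e ∈ E₁, ¬ e.IsDiag) (hT₁ : ⟪E₁⟫.IsTree) (E₂ : Finset (Sym2 V))
    (hE₂ : ∀ e ∈ E₂, ¬ e.IsDiag) (hT₂ : ⟪E₂⟫.IsTree) :
    ∃ ψ : {e // e ∈ E₁} ≃ {e // e ∈ E₂},
      (∀ e : {e // e ∈ E₁}, ⟪insert (ψ e : Sym2 V) (E₁.erase e)⟫.IsTree) ∧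
        ∀ e : {e // e ∈ E₁}, (e : Sym2 V) ∈ E₂ → (ψ e : Sym2 V) = e := by
  by_cases hsub : E₁ ⊆ E₂
  · obtain rfl : E₁ = E₂ :=
      eq_of_subset_of_card_le hsub (card_eq_of_isTree_fromEdgeSet hE₂ hE₁ hT₂ hT₁).le
    exact ⟨Equiv.refl _, fun e => by simpa [insert_erase e.2] using hT₁, fun _ _ => rfl⟩
  obtain ⟨e, he₁, he₂⟩ := not_subset.mp hsub
  obtain ⟨f, hf₂, hf₁, hT₁', hT₂'⟩ := hT₁.exists_symm_exchange hE₁ hE₂ hT₂ he₁ he₂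
  have hfe : f ≠ e := fun h => hf₁ (h ▸ he₁)
  have hE₂' : ∀ x ∈ insert e (E₂.erase f), ¬ x.IsDiag := by
    simpa using ⟨hE₁ e he₁, fun x _ hx => hE₂ x hx⟩
  obtain ⟨ψ, hψT, hψfix⟩ := hT₁.exists_equiv_isTree_insert_erase hE₁ _ hE₂' hT₂'
  have hswap : ∀ x, x ∈ insert e (E₂.erase f) ↔ Equiv.swap e f x ∈ E₂ := by
    intro x
    rcases eq_or_ne x e with rfl | hxe
    · simp [hf₂]
    rcases eq_or_ne x f with rfl | hxf
    · simp [hxe, he₂]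
    · simp [hxe, hxf, Equiv.swap_apply_of_ne_of_ne]
  refine ⟨ψ.trans ((Equiv.swap e f).subtypeEquiv hswap), fun x => ?_, fun x hx => ?_⟩
  · simp only [Equiv.trans_apply, Equiv.subtypeEquiv_apply]
    by_cases hxe : (ψ x : Sym2 V) = e
    · obtain rfl : x = ⟨e, he₁⟩ := ψ.injective <| Subtype.ext <|
        hxe.trans (hψfix ⟨e, he₁⟩ (mem_insert_self _ _)).symm
      rwa [hxe, Equiv.swap_apply_left]
    · have hxf : (ψ x : Sym2 V) ≠ f := fun h => by simpa [h, hfe] using (ψ x).2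
      rw [Equiv.swap_apply_of_ne_of_ne hxe hxf]
      exact hψT x
  · have hxe : (x : Sym2 V) ≠ e := fun h => he₂ (h ▸ hx)
    have hxf : (x : Sym2 V) ≠ f := fun h => hf₁ (h ▸ x.2)
    simp only [Equiv.trans_apply, Equiv.subtypeEquiv_apply]
    rw [hψfix x (by simp [hxe, hxf, hx]), Equiv.swap_apply_of_ne_of_ne hxe hxf]
termination_by #(E₂ \ E₁)
decreasing_by
  have : insert e (E₂.erase f) \ E₁ = (E₂ \ E₁).erase f := by
    ext x; grind
  rw [this]
  exact card_erase_lt_of_mem (mem_sdiff.mpr ⟨hf₂, hf₁⟩)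

end SimpleGraph

theorem stmt_7 (V : Type*) [Fintype V] [DecidableEq V]
    (G : SimpleGraph V) (c : Sym2 V → ℝ) (hc : ∀ e, 0 < c e)
    (E1 E2 : Finset (Sym2 V))
    (hE1 : ↑E1 ⊆ G.edgeSet) (hE2 : ↑E2 ⊆ G.edgeSet)
    (hT1 : (SimpleGraph.fromEdgeSet (↑E1 : Set (Sym2 V))).IsTree)
    (hT2 : (SimpleGraph.fromEdgeSet (↑E2 : Set (Sym2 V))).IsTree)
    (hmin : ∀ E : Finset (Sym2 V), ↑E ⊆ G.edgeSet →
      (SimpleGraph.fromEdgeSet (↑E : Set (Sym2 V))).IsTree →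
      ∑ e ∈ E1, c e ≤ ∑ e ∈ E, c e) :
    ∃ ψ : {e // e ∈ E1} ≃ {e // e ∈ E2},
      (∀ e : {e // e ∈ E1},
        (SimpleGraph.fromEdgeSet
          (↑(insert ((ψ e : Sym2 V)) (E1.erase (e : Sym2 V))) : Set (Sym2 V))).IsTree) ∧
      ∏ e ∈ E1, c e ≤ ∏ e ∈ E2, c e := by
  have hdiag {E : Finset (Sym2 V)} (hE : ↑E ⊆ G.edgeSet) : ∀ e ∈ E, ¬ e.IsDiag :=
    fun _ he => G.not_isDiag_of_mem_edgeSet (hE he)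
  obtain ⟨ψ, hψ, -⟩ := hT1.exists_equiv_isTree_insert_erase (hdiag hE1) E2 (hdiag hE2) hT2
  refine ⟨ψ, hψ, prod_le_prod_of_equiv ψ (fun e _ => (hc e).le) fun e => ?_⟩
  have hsub : ↑(insert (ψ e : Sym2 V) (E1.erase e)) ⊆ G.edgeSet := by
    rw [coe_insert, coe_erase, Set.insert_subset_iff]
    exact ⟨hE2 (ψ e).2, Set.sdiff_subset.trans hE1⟩
  have hcard := card_eq_of_isTree_fromEdgeSet (hdiag hsub) (hdiag hE1) (hψ e) hT1
  exact le_of_sum_le_sum_insert_erase e.2 (notMem_erase_of_card_insert_erase e.2 hcard)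
    (hmin _ hsub (hψ e))
end

section
/- Let α ≥ 2 and let (V, d) be a finite metric space with root vertex 0. Suppose a tree T on vertex set V admits a partition of its edges into levels E¹,…,Eʳ such that (i) for each l and each connected component of E¹∪⋯∪Eˡ, the head j of the component (the vertex maximizing an assigned value b(j), with b(0)=∞) satisfies b(j) ≥ l, and (ii) every edge in Eˡ has length at most 2α^(l+1). Then the total edge length of T is at most (2α³/(α-1))·Σ_{v ≠ 0} α^(b(v)). -/
/-!
Orient every edge of `T` towards the root. The edges of level `> k` are exactly the edges
missing from the forest `F_k` of levels `≤ k`, and sending such an edge to the head of the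
`F_k`-component of its lower endpoint is injective, because a component of `F_k` missing the
root is separated from it by a single edge of `T`; its values are non-root vertices of
`b`-value `≥ k`. Hence at most `#{v ≠ 0 | b v + 1 ≥ m}` edges have level `≥ m`, for every
`m`, and summing the monotone weights `α ^ (lev e + 1)` layer by layer gives
`∑ₑ α ^ (lev e + 1) ≤ α² ∑_{v ≠ 0} α ^ b(v)`, which is stronger than needed since
`α / (α - 1) ≥ 1`.
-/

/-- The length of a tree edge, as a function on `Sym2 V`, in a metric space. -/
noncomputable def edgeLen (V : Type*) [MetricSpace V] : Sym2 V → ℝ :=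
  Sym2.lift ⟨fun u w => dist u w, fun u w => dist_comm u w⟩

open Finset

namespace Finset

variable {ι κ M : Type*}

theorem sum_add_sum_range_ite_lt [AddCommMonoid M] (s : Finset ι) (g : ι → ℕ) (x : M)
    (d : ℕ → M) (N : ℕ) :
    ∑ a ∈ s, (x + ∑ i ∈ range N, if i < g a then d i else 0) =
      #s • x + ∑ i ∈ range N, #{a ∈ s | i < g a} • d i := by
  rw [sum_add_distrib, sum_const, sum_comm]
  congr 1
  refine sum_congr rfl fun i _ => ?_
  rw [← sum_filter, sum_const]

theorem add_sum_range_ite_lt [AddCommGroup M] (f : ℕ → M) (n N : ℕ) :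
    f 0 + ∑ i ∈ range N, (if i < n then f (i + 1) - f i else 0) = f (min n N) := by
  rw [← sum_filter, show {i ∈ range N | i < n} = range (min n N) by ext; simp; omega,
    sum_range_sub, add_sub_cancel]

theorem sum_comp_le_sum_comp_of_card_filter_le [AddCommGroup M] [PartialOrder M]
    [IsOrderedAddMonoid M] {s : Finset ι} {t : Finset κ} {g : ι → ℕ}
    {h : κ → ℕ} {f : ℕ → M} (hf : Monotone f) (hf0 : 0 ≤ f 0)
    (hcard : ∀ m, #{a ∈ s | m ≤ g a} ≤ #{b ∈ t | m ≤ h b}) :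
    ∑ a ∈ s, f (g a) ≤ ∑ b ∈ t, f (h b) := by
  set N := s.sup g
  have hd : ∀ i, 0 ≤ f (i + 1) - f i := fun i => sub_nonneg.2 (hf i.le_succ)
  calc ∑ a ∈ s, f (g a) = ∑ a ∈ s, f (min (g a) N) :=
        sum_congr rfl fun a ha => by rw [min_eq_left (le_sup ha)]
    _ = #s • f 0 + ∑ i ∈ range N, #{a ∈ s | i < g a} • (f (i + 1) - f i) := by
        simp only [← add_sum_range_ite_lt, sum_add_sum_range_ite_lt]
    _ ≤ #t • f 0 + ∑ i ∈ range N, #{b ∈ t | i < h b} • (f (i + 1) - f i) := by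
        gcongr with i
        · simpa using hcard 0
        · exact hd i
        · exact hcard (i + 1)
    _ = ∑ b ∈ t, f (min (h b) N) := by
        simp only [← add_sum_range_ite_lt, sum_add_sum_range_ite_lt]
    _ ≤ ∑ b ∈ t, f (h b) := sum_le_sum fun b _ => hf (min_le_left _ _)

end Finset

namespace SimpleGraph

variable {V : Type*} {G T : SimpleGraph V}

theorem Walk.IsPath.reachable_deleteEdges_of_mem_edges [DecidableEq V] {u w c : V}
    {p : G.Walk u w} (hp : p.IsPath) {e e' : Sym2 V} (he : e ∈ p.edges) (hue : u ∈ e)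
    (he' : e' ∈ p.edges) (hne : e' ≠ e) (hc : c ∈ e') : (G.deleteEdges {e}).Reachable c w := by
  cases p with
  | nil => simp at he
  | cons hadj q =>
    rw [Walk.cons_isPath_iff] at hp
    have he_q : e ∉ q.edges := fun h => hp.2 (Walk.mem_support_of_mem_edges h hue)
    rw [Walk.edges_cons, List.mem_cons] at he he'
    have he'_q : e' ∈ q.edges := he'.resolve_left (he.resolve_right he_q ▸ hne)
    have hcq : c ∈ q.support := Walk.mem_support_of_mem_edges he'_q hc
    exact ⟨(q.dropUntil c hcq).toDeleteEdge e
      fun h => he_q (q.edges_dropUntil_subset_edges hcq h)⟩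

theorem IsAcyclic.exists_mem_not_reachable_deleteEdges (hT : T.IsAcyclic) (root : V)
    {e : Sym2 V} (he : e ∈ T.edgeSet) :
    ∃ c ∈ e, ¬(T.deleteEdges {e}).Reachable c root := by
  induction e using Sym2.ind with
  | _ u w =>
    by_contra! h
    exact isBridge_iff.1 (isAcyclic_iff_forall_isBridge.1 hT he)
      ((h u (Sym2.mem_mk_left u w)).trans (h w (Sym2.mem_mk_right u w)).symm)

/-- Deleting the edges `S` from a tree leaves `#S` components that miss the root; each of them
contains some `j` with `P j`, and these are distinct. -/
theorem IsTree.card_le_card_filter_of_forall_reachable [Fintype V] [DecidableEq V]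
    (hT : T.IsTree) (root : V) {S : Finset (Sym2 V)} (hS : ↑S ⊆ T.edgeSet)
    {F : SimpleGraph V} (hF : F ≤ T.deleteEdges ↑S) (P : V → Prop) [DecidablePred P]
    (hP : ∀ v, ∃ j, F.Reachable v j ∧ (j = root ∨ P j)) :
    #S ≤ #{v ∈ univ.erase root | P v} := by
  have hFe : ∀ e ∈ S, F ≤ T.deleteEdges {e} := fun e he =>
    hF.trans (deleteEdges_anti (Set.singleton_subset_iff.2 he))
  have hcut : ∀ e ∈ S, ∃ c ∈ e, ¬(T.deleteEdges {e}).Reachable c root := fun e he =>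
    hT.isAcyclic.exists_mem_not_reachable_deleteEdges root (hS he)
  have : Nonempty V := hT.connected.nonempty
  choose! c hce hcut using hcut
  choose j hj hjP using hP
  have hj_ne : ∀ e ∈ S, j (c e) ≠ root := fun e he hroot =>
    hcut e he (hroot ▸ (hj (c e)).mono (hFe e he))
  refine card_le_card_of_injOn (fun e => j (c e)) (fun e he => ?_) fun e₁ he₁ e₂ he₂ hjj => ?_
  · simpa [hj_ne e he] using hjP (c e)
  by_contra hne
  replace hjj : j (c e₁) = j (c e₂) := hjj
  have h₁₂ : F.Reachable (c e₁) (c e₂) := (hj (c e₁)).trans (hjj ▸ (hj (c e₂)).symm)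
  obtain ⟨p, hp⟩ := (hT.connected.preconnected (c e₁) root).exists_isPath
  have hp₁ : e₁ ∈ p.edges := by
    by_contra h
    exact hcut e₁ he₁ ⟨p.toDeleteEdge e₁ h⟩
  have hp₂ : e₂ ∈ p.edges := by
    by_contra h
    exact hcut e₂ he₂ ((h₁₂.symm.mono (hFe e₂ he₂)).trans ⟨p.toDeleteEdge e₂ h⟩)
  exact hcut e₁ he₁ ((h₁₂.mono (hFe e₁ he₁)).trans
    (hp.reachable_deleteEdges_of_mem_edges hp₁ (hce e₁ he₁) hp₂ (Ne.symm hne) (hce e₂ he₂)))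

theorem IsTree.card_filter_lt_le_card_filter [Fintype V] [DecidableEq V] [DecidableRel T.Adj]
    (hT : T.IsTree) (root : V) (lev : Sym2 V → ℕ) (k : ℕ) (P : V → Prop) [DecidablePred P]
    (hP : ∀ v, ∃ j, (fromEdgeSet {e | e ∈ T.edgeSet ∧ lev e ≤ k}).Reachable v j ∧
      (j = root ∨ P j)) :
    #{e ∈ T.edgeFinset | k < lev e} ≤ #{v ∈ univ.erase root | P v} := by
  refine hT.card_le_card_filter_of_forall_reachable root
    (fun e he => mem_edgeFinset.1 (mem_filter.1 he).1) ?_ P hP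
  rw [← edgeSet_subset_edgeSet, edgeSet_fromEdgeSet, edgeSet_deleteEdges]
  rintro e ⟨⟨he, hle⟩, -⟩
  exact ⟨he, fun h => by simp at h; omega⟩

end SimpleGraph

theorem card_filter_le_lev_le {V : Type*} [Fintype V] [DecidableEq V] {root : V} {b : V → ℕ}
    {T : SimpleGraph V} [DecidableRel T.Adj] (hT : T.IsTree) {r : ℕ} {lev : Sym2 V → ℕ}
    (hlev : ∀ e ∈ T.edgeSet, lev e ≤ r)
    (hhead : ∀ l : ℕ, 1 ≤ l → l ≤ r → ∀ v : V,
      ∃ j : V, (SimpleGraph.fromEdgeSet {e | e ∈ T.edgeSet ∧ lev e ≤ l}).Reachable v j ∧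
        (j = root ∨ l ≤ b j))
    (m : ℕ) : #{e ∈ T.edgeFinset | m ≤ lev e} ≤ #{v ∈ univ.erase root | m ≤ b v + 1} := by
  obtain _ | k := m
  · have := hT.card_edgeFinset
    simp only [zero_le, filter_true, card_erase_of_mem (mem_univ root), card_univ]
    omega
  by_cases hkr : r < k
  · refine (card_eq_zero.2 (filter_eq_empty_iff.2 fun e he hle => ?_)).trans_le (Nat.zero_le _)
    have := hlev e (SimpleGraph.mem_edgeFinset.1 he)
    omega
  simp only [add_le_add_iff_right]
  refine hT.card_filter_lt_le_card_filter root lev k _ fun v => ?_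
  rcases k.eq_zero_or_pos with rfl | hk
  · exact ⟨v, .refl v, .inr (Nat.zero_le _)⟩
  · exact hhead k hk (not_lt.1 hkr) v

theorem stmt_8 (V : Type*) [Fintype V] [DecidableEq V] [MetricSpace V]
    (root : V) (α : ℝ) (hα : 2 ≤ α) (b : V → ℕ)
    (T : SimpleGraph V) [DecidableRel T.Adj] (hT : T.IsTree)
    (r : ℕ) (lev : Sym2 V → ℕ)
    (hlev : ∀ e ∈ T.edgeSet, 1 ≤ lev e ∧ lev e ≤ r)
    -- (i): the head of each component of the first l levels has b-value ≥ l
    (hhead : ∀ l : ℕ, 1 ≤ l → l ≤ r → ∀ v : V,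
      ∃ j : V, (SimpleGraph.fromEdgeSet {e | e ∈ T.edgeSet ∧ lev e ≤ l}).Reachable v j ∧
        (j = root ∨ l ≤ b j))
    -- (ii): edges at level l have length at most 2α^(l+1)
    (hlen : ∀ u w : V, T.Adj u w → dist u w ≤ 2 * α ^ (lev s(u, w) + 1)) :
    ∑ e ∈ T.edgeFinset, edgeLen V e ≤
      (2 * α ^ 3 / (α - 1)) * ∑ v ∈ Finset.univ.erase root, α ^ (b v) := by
  have hweights : ∑ e ∈ T.edgeFinset, α ^ (lev e + 1) ≤
      ∑ v ∈ univ.erase root, α ^ (b v + 1 + 1) :=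
    sum_comp_le_sum_comp_of_card_filter_le (f := fun n => α ^ (n + 1))
      (fun m n hmn => pow_le_pow_right₀ (by linarith) (by omega)) (by positivity)
      (card_filter_le_lev_le hT (fun e he => (hlev e he).2) hhead)
  calc ∑ e ∈ T.edgeFinset, edgeLen V e ≤ ∑ e ∈ T.edgeFinset, 2 * α ^ (lev e + 1) := by
        refine sum_le_sum fun e he => ?_
        induction e using Sym2.ind with
        | _ u w => exact hlen u w (SimpleGraph.mem_edgeFinset.1 he)
    _ ≤ 2 * α ^ 2 * ∑ v ∈ univ.erase root, α ^ b v := by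
        rw [← mul_sum, mul_assoc]
        gcongr
        rw [mul_sum]
        exact hweights.trans_eq (sum_congr rfl fun v _ => by ring)
    _ ≤ (2 * α ^ 3 / (α - 1)) * ∑ v ∈ univ.erase root, α ^ b v := by
        gcongr
        rw [le_div_iff₀ (by linarith)]
        nlinarith
end

section
/- Consider the hierarchical clustering process on a finite metric space [i] with parameter α ≥ 2: C_i(0) is the partition into singletons, and C_i(t) is obtained from C_i(t-1) by repeatedly merging any two clusters at distance less than 2α^(t+1) until all pairs of clusters are at distance at least 2α^(t+1). If S ⊆ [i] satisfies B(S, 2α^t) ∩ [i] = S (i.e., every point of [i] within distance 2α^t of S lies in S), then for every phase k ≤ t-1, each cluster of C_i(k) is either contained in S or disjoint from S. -/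
/-- The hierarchical clustering relation with parameter `α` on the point set `A ⊆ ℕ`
(with distances `d`): `clusterRel d α A t x y` means that `x` and `y` lie in a common
cluster of the clustering `C_A(t)` at the end of phase `t`.  `C_A(0)` consists of
singletons, and phase `t+1` repeatedly merges clusters at distance less than
`2·α^(t+2)` — equivalently, takes the equivalence relation generated by pairs of
points of `A` at distance less than `2·α^(t+2)` together with the previous relation. -/
def clusterRel (d : ℕ → ℕ → ℝ) (α : ℝ) (A : Set ℕ) : ℕ → ℕ → ℕ → Prop
  | 0 => fun x y => x = y
  | (t + 1) => Relation.EqvGen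
      (fun x y => clusterRel d α A t x y ∨ (x ∈ A ∧ y ∈ A ∧ d x y < 2 * α ^ (t + 2)))

theorem stmt_9 (d : ℕ → ℕ → ℝ) (α : ℝ) (hα : 2 ≤ α)
    (hself : ∀ x, d x x = 0) (hsym : ∀ x y, d x y = d y x)
    (htri : ∀ x y z, d x z ≤ d x y + d y z)
    (hmin : ∀ x y, x ≠ y → 2 * α ≤ d x y)
    (i : ℕ) (S : Set ℕ) (hSsub : S ⊆ Set.Iic i) (t : ℕ)
    -- B(S, 2α^t) ∩ [i] = S
    (hS : ∀ y ∈ Set.Iic i, (∃ s ∈ S, d y s ≤ 2 * α ^ t) → y ∈ S) :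
    ∀ k : ℕ, k + 1 ≤ t → ∀ x y : ℕ,
      clusterRel d α (Set.Iic i) k x y → (x ∈ S ↔ y ∈ S) := by
  intro k
  induction k with
  | zero =>
    intro _ x y h
    have hxy : x = y := h
    rw [hxy]
  | succ k ih =>
    intro hk x y h
    induction h with
    | rel a b hab =>
      rcases hab with h | ⟨ha, hb, hd⟩
      · exact ih (by omega) a b h
      · have hle : (2:ℝ) * α ^ (k + 2) ≤ 2 * α ^ t := by
          have := pow_le_pow_right₀ (by linarith : (1:ℝ) ≤ α) (by omega : k + 2 ≤ t)
          linarith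
        constructor
        · intro haS
          exact hS b hb ⟨a, haS, by rw [hsym]; linarith⟩
        · intro hbS
          exact hS a ha ⟨b, hbS, by linarith⟩
    | refl a => exact Iff.rfl
    | symm a b _ ih2 => exact ih2.symm
    | trans a b c _ _ ih1 ih2 => exact ih1.trans ih2
end

section
/- In the hierarchical clustering process with parameter α ≥ 2 on points arriving one by one, the final partition C_i(t) at each scale t equals the partition of [i] into connected components of the graph on [i] where j,l are adjacent iff d(j,l) ≤ 2α^(t+1) after transitively closing through earlier scales; consequently, for every cluster C ∈ C_i(t) either (a) the new point i ∉ C and C is also a cluster of C_{i-1}(t), or (b) i ∈ C and C = {i} ∪ C₁ ∪ ⋯ ∪ C_p for some clusters C₁,…,C_p of C_{i-1}(t) (possibly p = 0). In other words, C_{i-1}(t) refines C_i(t). -/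
namespace clusterRel

variable {d : ℕ → ℕ → ℝ} {α : ℝ}

theorem trans {A : Set ℕ} :
    ∀ {t x y z}, clusterRel d α A t x y → clusterRel d α A t y z → clusterRel d α A t x z
  | 0, _, _, _, h, h' => Eq.trans h h'
  | _ + 1, _, _, _, h, h' => Relation.EqvGen.trans _ _ _ h h'

theorem mono {A B : Set ℕ} (hAB : A ⊆ B) :
    ∀ {t x y}, clusterRel d α A t x y → clusterRel d α B t x y
  | 0, _, _, h => h
  | _ + 1, _, _, h =>
      Relation.EqvGen.mono
        (fun _ _ hab => hab.imp (mono hAB) fun ⟨ha, hb, hd⟩ => ⟨hAB ha, hAB hb, hd⟩) _ _ h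

theorem rel_cluster_or_rel_of_insert {B : Set ℕ} {i : ℕ} :
    ∀ {t x y}, clusterRel d α (insert i B) t x y →
      clusterRel d α (insert i B) t x i ∨ clusterRel d α B t x y
  | 0, _, _, h => Or.inr h
  | t + 1, x, y, h => by
    induction h with
    | rel a b hab =>
      rcases hab with hprev | ⟨ha, hb, hd⟩
      · exact (rel_cluster_or_rel_of_insert hprev).imp
          (fun h => .rel _ _ (.inl h)) (fun h => .rel _ _ (.inl h))
      · rcases eq_or_ne a i with rfl | hai
        · exact .inl (.refl a)
        rcases eq_or_ne b i with rfl | hbi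
        · exact .inl (.rel _ _ (.inr ⟨ha, hb, hd⟩))
        · exact .inr (.rel _ _ (.inr ⟨ha.resolve_left hai, hb.resolve_left hbi, hd⟩))
    | refl a => exact .inr (.refl a)
    | symm a b hab ih =>
      exact ih.imp (fun hai => (hab.symm _ _).trans _ _ _ hai) (fun hab' => hab'.symm _ _)
    | trans a b c _ _ ihab ihbc =>
      rcases ihab with hai | hab
      · exact .inl hai
      rcases ihbc with hbi | hbc
      · exact .inl (trans (mono (Set.subset_insert i B) hab) hbi)
      · exact .inr (trans hab hbc)

end clusterRel

theorem stmt_10_general (d : ℕ → ℕ → ℝ) (α : ℝ)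
    (i : ℕ) :
    -- C_{i-1}(t) refines C_i(t)
    (∀ t x y, clusterRel d α (Set.Iio i) t x y → clusterRel d α (Set.Iic i) t x y) ∧
    -- (a) a cluster of C_i(t) not containing i is a cluster of C_{i-1}(t)
    (∀ t, ∀ x ∈ Set.Iio i, ¬ clusterRel d α (Set.Iic i) t x i →
      ∀ y, clusterRel d α (Set.Iic i) t x y ↔ clusterRel d α (Set.Iio i) t x y) ∧
    -- (b) the cluster of C_i(t) containing i is {i} together with a union of
    -- clusters of C_{i-1}(t), i.e. it is saturated with respect to C_{i-1}(t)
    (∀ t, ∀ y ∈ Set.Iio i, clusterRel d α (Set.Iic i) t i y →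
      ∀ z, clusterRel d α (Set.Iio i) t y z → clusterRel d α (Set.Iic i) t i z) := by
  have refines : ∀ {t x y}, clusterRel d α (Set.Iio i) t x y → clusterRel d α (Set.Iic i) t x y :=
    clusterRel.mono Set.Iio_subset_Iic_self
  refine ⟨fun _ _ _ => refines, fun t x _ hxi y => ⟨fun hxy => ?_, refines⟩,
    fun t y _ hiy z hyz => hiy.trans (refines hyz)⟩
  rw [← Set.Iio_insert] at hxi hxy
  exact (clusterRel.rel_cluster_or_rel_of_insert hxy).resolve_left hxi

/-- When point `i` arrives, the clustering `C_{i-1}(t)` (on `[i-1] = Set.Iio i`)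
refines `C_i(t)` (on `[i] = Set.Iic i`); each cluster of `C_i(t)` not containing `i`
is a cluster of `C_{i-1}(t)`, and the cluster of `C_i(t)` containing `i` is `{i}`
together with a union of clusters of `C_{i-1}(t)`. -/
theorem stmt_10 (d : ℕ → ℕ → ℝ) (α : ℝ) (hα : 2 ≤ α)
    (hself : ∀ x, d x x = 0) (hsym : ∀ x y, d x y = d y x)
    (htri : ∀ x y z, d x z ≤ d x y + d y z)
    (hmin : ∀ x y, x ≠ y → 2 * α ≤ d x y)
    (i : ℕ) :
    -- C_{i-1}(t) refines C_i(t)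
    (∀ t x y, clusterRel d α (Set.Iio i) t x y → clusterRel d α (Set.Iic i) t x y) ∧
    -- (a) a cluster of C_i(t) not containing i is a cluster of C_{i-1}(t)
    (∀ t, ∀ x ∈ Set.Iio i, ¬ clusterRel d α (Set.Iic i) t x i →
      ∀ y, clusterRel d α (Set.Iic i) t x y ↔ clusterRel d α (Set.Iio i) t x y) ∧
    -- (b) the cluster of C_i(t) containing i is {i} together with a union of
    -- clusters of C_{i-1}(t), i.e. it is saturated with respect to C_{i-1}(t)
    (∀ t, ∀ y ∈ Set.Iio i, clusterRel d α (Set.Iic i) t i y →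
      ∀ z, clusterRel d α (Set.Iio i) t y z → clusterRel d α (Set.Iic i) t i z) :=
  stmt_10_general d α i
end

section
/- With the hierarchical clustering process at parameter α ≥ 2: if j, l ∈ [i-1] lie in a common cluster of C_i(t) (the clustering including the new point i), then j and l lie in a common cluster of C_{i-1}(t) or of C_{i-1}(t+1). -/
namespace StmtAux

variable {d : ℕ → ℕ → ℝ} {α : ℝ} {A : Set ℕ}

lemma cr_refl : ∀ {t : ℕ} (x : ℕ), clusterRel d α A t x x
  | 0, _ => rfl
  | (_ + 1), x => Relation.EqvGen.refl x

lemma cr_symm : ∀ {t x y : ℕ}, clusterRel d α A t x y → clusterRel d α A t y x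
  | 0, _, _, h => h.symm
  | (_ + 1), _, _, h => Relation.EqvGen.symm _ _ h

lemma cr_trans : ∀ {t x y z : ℕ}, clusterRel d α A t x y → clusterRel d α A t y z →
    clusterRel d α A t x z
  | 0, _, _, _, h1, h2 => h1.trans h2
  | (_ + 1), _, _, _, h1, h2 => Relation.EqvGen.trans _ _ _ h1 h2

lemma cr_mono {t x y : ℕ} (h : clusterRel d α A t x y) : clusterRel d α A (t + 1) x y :=
  Relation.EqvGen.rel _ _ (Or.inl h)

/-- In the clustering on `Iio i`, the point `i` is only related to itself. -/
lemma rel_top_iff {i : ℕ} : ∀ {t x y : ℕ}, clusterRel d α (Set.Iio i) t x y → (x = i ↔ y = i)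
  | 0, _, _, h => by subst h; rfl
  | (t + 1), x, y, h => by
      induction h with
      | rel a b hab =>
          rcases hab with h' | h'
          · exact rel_top_iff h'
          · constructor
            · intro hx; exact absurd h'.1 (by simp [hx])
            · intro hy; exact absurd h'.2.1 (by simp [hy])
      | refl => exact Iff.rfl
      | symm a b _ ih => exact ih.symm
      | trans a b c _ _ ih1 ih2 => exact ih1.trans ih2

/-- `a` is a proper point near `i` at scale `t`. -/
def Near (d : ℕ → ℕ → ℝ) (α : ℝ) (i t a : ℕ) : Prop :=
  a ≤ i ∧ a ≠ i ∧ d a i < 2 * α ^ (t + 1)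

/-- Invariant maintained along the generation of `clusterRel d α (Set.Iic i) t`. -/
def S (d : ℕ → ℕ → ℝ) (α : ℝ) (i t x y : ℕ) : Prop :=
  (x = i ∧ y = i) ∨
  (x = i ∧ ∃ b, Near d α i t b ∧ clusterRel d α (Set.Iio i) t b y) ∨
  (y = i ∧ ∃ a, Near d α i t a ∧ clusterRel d α (Set.Iio i) t a x) ∨
  clusterRel d α (Set.Iio i) t x y ∨
  (∃ a b, Near d α i t a ∧ Near d α i t b ∧
    clusterRel d α (Set.Iio i) t x a ∧ clusterRel d α (Set.Iio i) t b y)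

lemma near_mono (hα : 2 ≤ α) {i t a : ℕ} (h : Near d α i t a) : Near d α i (t + 1) a := by
  obtain ⟨h1, h2, h3⟩ := h
  refine ⟨h1, h2, lt_of_lt_of_le h3 ?_⟩
  have h1α : (1 : ℝ) ≤ α := by linarith
  have := pow_le_pow_right₀ h1α (by omega : t + 1 ≤ t + 2)
  nlinarith

lemma S_mono (hα : 2 ≤ α) {i t x y : ℕ} (h : S d α i t x y) : S d α i (t + 1) x y := by
  rcases h with h | ⟨hx, b, nb, hb⟩ | ⟨hy, a, na, ha⟩ | h | ⟨a, b, na, nb, ha, hb⟩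
  · exact Or.inl h
  · exact Or.inr (Or.inl ⟨hx, b, near_mono hα nb, cr_mono hb⟩)
  · exact Or.inr (Or.inr (Or.inl ⟨hy, a, near_mono hα na, cr_mono ha⟩))
  · exact Or.inr (Or.inr (Or.inr (Or.inl (cr_mono h))))
  · exact Or.inr (Or.inr (Or.inr (Or.inr
      ⟨a, b, near_mono hα na, near_mono hα nb, cr_mono ha, cr_mono hb⟩)))

lemma S_refl {i t : ℕ} (x : ℕ) : S d α i t x x := by
  by_cases hx : x = i
  · exact Or.inl ⟨hx, hx⟩
  · exact Or.inr (Or.inr (Or.inr (Or.inl (cr_refl x))))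

lemma S_symm {i t x y : ℕ} (h : S d α i t x y) : S d α i t y x := by
  rcases h with ⟨hx, hy⟩ | ⟨hx, b, nb, hb⟩ | ⟨hy, a, na, ha⟩ | h | ⟨a, b, na, nb, ha, hb⟩
  · exact Or.inl ⟨hy, hx⟩
  · exact Or.inr (Or.inr (Or.inl ⟨hx, b, nb, hb⟩))
  · exact Or.inr (Or.inl ⟨hy, a, na, ha⟩)
  · exact Or.inr (Or.inr (Or.inr (Or.inl (cr_symm h))))
  · exact Or.inr (Or.inr (Or.inr (Or.inr ⟨b, a, nb, na, cr_symm hb, cr_symm ha⟩)))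

lemma S_trans {i t x y z : ℕ} (hxy : S d α i t x y) (hyz : S d α i t y z) : S d α i t x z := by
  rcases hxy with ⟨hx, hy⟩ | ⟨hx, b, nb, hb⟩ | ⟨hy, a, na, ha⟩ | hxy | ⟨a, b, na, nb, ha, hb⟩
  -- case C1 : x = i ∧ y = i
  · rcases hyz with ⟨_, hz⟩ | ⟨_, b, nb, hb⟩ | ⟨hz, _⟩ | hyz | ⟨a', b', na', nb', ha', hb'⟩
    · exact Or.inl ⟨hx, hz⟩
    · exact Or.inr (Or.inl ⟨hx, b, nb, hb⟩)
    · exact Or.inl ⟨hx, hz⟩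
    · exact Or.inl ⟨hx, (rel_top_iff hyz).mp hy⟩
    · exact absurd ((rel_top_iff ha').mp hy) na'.2.1
  -- case C2 : x = i, near b, b ~ y
  · rcases hyz with ⟨_, hz⟩ | ⟨_, b', nb', hb'⟩ | ⟨hz, _⟩ | hyz | ⟨a', b', na', nb', ha', hb'⟩
    · exact Or.inl ⟨hx, hz⟩
    · exact Or.inr (Or.inl ⟨hx, b', nb', hb'⟩)
    · exact Or.inl ⟨hx, hz⟩
    · exact Or.inr (Or.inl ⟨hx, b, nb, cr_trans hb hyz⟩)
    · exact Or.inr (Or.inl ⟨hx, b', nb', hb'⟩)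
  -- case C3 : y = i, near a, a ~ x
  · rcases hyz with ⟨_, hz⟩ | ⟨_, b', nb', hb'⟩ | ⟨hz, _⟩ | hyz | ⟨a', b', na', nb', ha', hb'⟩
    · exact Or.inr (Or.inr (Or.inl ⟨hz, a, na, ha⟩))
    · exact Or.inr (Or.inr (Or.inr (Or.inr ⟨a, b', na, nb', cr_symm ha, hb'⟩)))
    · exact Or.inr (Or.inr (Or.inl ⟨hz, a, na, ha⟩))
    · exact Or.inr (Or.inr (Or.inl ⟨(rel_top_iff hyz).mp hy, a, na, ha⟩))
    · exact absurd ((rel_top_iff ha').mp hy) na'.2.1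
  -- case C4 : x ~ y
  · rcases hyz with ⟨hy, hz⟩ | ⟨hy, b', nb', hb'⟩ | ⟨hz, a', na', ha'⟩ | hyz |
      ⟨a', b', na', nb', ha', hb'⟩
    · exact Or.inl ⟨(rel_top_iff hxy).mpr hy, hz⟩
    · exact Or.inr (Or.inl ⟨(rel_top_iff hxy).mpr hy, b', nb', hb'⟩)
    · exact Or.inr (Or.inr (Or.inl ⟨hz, a', na', cr_trans ha' (cr_symm hxy)⟩))
    · exact Or.inr (Or.inr (Or.inr (Or.inl (cr_trans hxy hyz))))
    · exact Or.inr (Or.inr (Or.inr (Or.inr ⟨a', b', na', nb', cr_trans hxy ha', hb'⟩)))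
  -- case C5 : x ~ a near, near b ~ y
  · rcases hyz with ⟨hy, hz⟩ | ⟨hy, b', nb', hb'⟩ | ⟨hz, a', na', ha'⟩ | hyz |
      ⟨a', b', na', nb', ha', hb'⟩
    · exact absurd ((rel_top_iff hb).mpr hy) nb.2.1
    · exact absurd ((rel_top_iff hb).mpr hy) nb.2.1
    · exact Or.inr (Or.inr (Or.inl ⟨hz, a, na, cr_symm ha⟩))
    · exact Or.inr (Or.inr (Or.inr (Or.inr ⟨a, b, na, nb, ha, cr_trans hb hyz⟩)))
    · exact Or.inr (Or.inr (Or.inr (Or.inr ⟨a, b', na, nb', ha, hb'⟩)))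

/-- Main structural lemma. -/
lemma key (hα : 2 ≤ α) (hsym : ∀ x y, d x y = d y x) (i : ℕ) :
    ∀ (t x y : ℕ), clusterRel d α (Set.Iic i) t x y → S d α i t x y := by
  intro t
  induction t with
  | zero =>
      intro x y h
      have hxy : x = y := h
      subst hxy
      exact S_refl x
  | succ t ih =>
      intro x y h
      induction h with
      | rel a b hab =>
          rcases hab with h' | ⟨haA, hbA, hd⟩
          · exact S_mono hα (ih a b h')
          · by_cases hai : a = i
            · by_cases hbi : b = i
              · exact Or.inl ⟨hai, hbi⟩
              · refine Or.inr (Or.inl ⟨hai, b, ⟨hbA, hbi, ?_⟩, cr_refl b⟩)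
                rw [hsym b i, ← hai]
                exact hd
            · by_cases hbi : b = i
              · refine Or.inr (Or.inr (Or.inl ⟨hbi, a, ⟨haA, hai, ?_⟩, cr_refl a⟩))
                rw [← hbi]; exact hd
              · refine Or.inr (Or.inr (Or.inr (Or.inl ?_)))
                exact Relation.EqvGen.rel _ _ (Or.inr
                  ⟨lt_of_le_of_ne haA hai, lt_of_le_of_ne hbA hbi, hd⟩)
      | refl x => exact S_refl x
      | symm a b _ ihab => exact S_symm ihab
      | trans a b c _ _ ih1 ih2 => exact S_trans ih1 ih2

end StmtAux

/-- If `j, l ∈ [i-1]` lie in a common cluster of `C_i(t)`, then they lie in a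
common cluster of `C_{i-1}(t)` or of `C_{i-1}(t+1)`. -/
theorem stmt_11 (d : ℕ → ℕ → ℝ) (α : ℝ) (hα : 2 ≤ α)
    (hself : ∀ x, d x x = 0) (hsym : ∀ x y, d x y = d y x)
    (htri : ∀ x y z, d x z ≤ d x y + d y z)
    (hmin : ∀ x y, x ≠ y → 2 * α ≤ d x y)
    (i : ℕ) (t : ℕ) (j l : ℕ) (hj : j ∈ Set.Iio i) (hl : l ∈ Set.Iio i)
    (h : clusterRel d α (Set.Iic i) t j l) :
    clusterRel d α (Set.Iio i) t j l ∨ clusterRel d α (Set.Iio i) (t + 1) j l := by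
  have hji : j ≠ i := Nat.ne_of_lt hj
  have hli : l ≠ i := Nat.ne_of_lt hl
  rcases StmtAux.key hα hsym i t j l h with ⟨hx, _⟩ | ⟨hx, _⟩ | ⟨hy, _⟩ | h4 |
      ⟨a, b, na, nb, ha, hb⟩
  · exact absurd hx hji
  · exact absurd hx hji
  · exact absurd hy hli
  · exact Or.inl h4
  · right
    -- j ~ a, d(a,b) small, b ~ l in C_{Iio i}(t+1)
    have haI : a ∈ Set.Iio i := lt_of_le_of_ne na.1 na.2.1
    have hbI : b ∈ Set.Iio i := lt_of_le_of_ne nb.1 nb.2.1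
    have hdab : d a b < 2 * α ^ (t + 2) := by
      have h1 := htri a i b
      have h2 : d i b = d b i := hsym i b
      have h3 := na.2.2
      have h4 := nb.2.2
      have hpow : (4 : ℝ) * α ^ (t + 1) ≤ 2 * α ^ (t + 2) := by
        have hαpos : (0 : ℝ) ≤ α ^ (t + 1) := by positivity
        have : α ^ (t + 2) = α ^ (t + 1) * α := by ring
        nlinarith
      linarith
    have edge : clusterRel d α (Set.Iio i) (t + 1) a b :=
      Relation.EqvGen.rel _ _ (Or.inr ⟨haI, hbI, hdab⟩)
    exact StmtAux.cr_trans (StmtAux.cr_mono ha)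
      (StmtAux.cr_trans edge (StmtAux.cr_mono hb))
end

section
/- Define rank_i(x) for x ∈ [i] as the largest t such that x is the minimum-index element of its cluster in C_i(t) (with rank_i(0) = ∞). Then for every j ∈ [i-1], rank_i(j) ≤ rank_{i-1}(j) ≤ rank_i(j) + 1; in particular ranks are non-increasing in i. -/
/-- `x ∈ A` is the leader (minimum-index element) of its cluster in `C_A(t)`. -/
def isLeader (d : ℕ → ℕ → ℝ) (α : ℝ) (A : Set ℕ) (t : ℕ) (x : ℕ) : Prop :=
  x ∈ A ∧ ∀ y ∈ A, clusterRel d α A t x y → x ≤ y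

/-- The rank of `x` in the clustering process on `A`: the largest phase `t` at which
`x` is still the leader of its cluster (`∞` if it is a leader forever, e.g. for the
root `0`). -/
noncomputable def rank (d : ℕ → ℕ → ℝ) (α : ℝ) (A : Set ℕ) (x : ℕ) : ℕ∞ :=
  sSup ((fun t : ℕ => (t : ℕ∞)) '' {t | isLeader d α A t x})

/-! Once the point `i` is removed, two points of `[0, i)` that were joined through `i` in phase
`t` are both within `2α^(t+1)` of `i`, hence within `4α^(t+1) ≤ 2α^(t+2)` of each other, and so
are merged directly in phase `t + 1`. Thus a leader in `C_{i-1}(t+1)` is still a leader in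
`C_i(t)`, while adding the point `i` can only enlarge clusters. -/

open Relation

def closeRel {X : Type*} (d : X → X → ℝ) (A : Set X) (r : ℝ) (x y : X) : Prop :=
  x ∈ A ∧ y ∈ A ∧ d x y < r

section closeRel

variable {X : Type*} {d : X → X → ℝ} {A B : Set X} {r s : ℝ}

theorem closeRel_mono (hAB : A ⊆ B) (hrs : r ≤ s) : closeRel d A r ≤ closeRel d B s :=
  fun _ _ ⟨hx, hy, hd⟩ => ⟨hAB hx, hAB hy, hd.trans_le hrs⟩

theorem eqvGen_closeRel_sdiff_singleton (hsym : ∀ x y, d x y = d y x)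
    (htri : ∀ x y z, d x z ≤ d x y + d y z) (hr : 0 ≤ r) {p x y : X} (hx : x ≠ p)
    (hy : y ≠ p) (h : EqvGen (closeRel d A r) x y) :
    EqvGen (closeRel d (A \ {p}) (2 * r)) x y := by
  set S := closeRel d (A \ {p}) (2 * r)
  have : Std.Symm (closeRel d A r) := ⟨fun a b ⟨ha, hb, hd⟩ => ⟨hb, ha, hsym b a ▸ hd⟩⟩
  rw [EqvGen.eqvGen_eq_reflTransGen] at h
  -- a path through `p` is short-cut at the last point `a` before it
  suffices key : ∀ z, ReflTransGen (closeRel d A r) x z →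
      (z ≠ p → EqvGen S x z) ∧ (z = p → ∃ a, closeRel d A r a p ∧ a ≠ p ∧ EqvGen S x a) from
    (key y h).1 hy
  intro z hz
  induction hz with
  | refl => exact ⟨fun _ => .refl x, fun h => absurd h hx⟩
  | @tail b c _ hbc ih =>
    obtain ⟨hb, hc, hd⟩ := hbc
    by_cases hbp : b = p
    · obtain ⟨a, ⟨ha, -, hap⟩, hap', hxa⟩ := ih.2 hbp
      subst hbp
      refine ⟨fun hcp => hxa.trans _ _ _ (.rel _ _ ⟨⟨ha, hap'⟩, ⟨hc, hcp⟩, ?_⟩),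
        fun _ => ⟨a, ⟨ha, hb, hap⟩, hap', hxa⟩⟩
      linarith [htri a b c]
    · have hxb := ih.1 hbp
      refine ⟨fun hcp => hxb.trans _ _ _ (.rel _ _ ⟨⟨hb, hbp⟩, ⟨hc, hcp⟩, by linarith⟩),
        fun hcp => by subst hcp; exact ⟨b, ⟨hb, hc, hd⟩, hbp, hxb⟩⟩

end closeRel

section clusterRel

variable {d : ℕ → ℕ → ℝ} {α : ℝ} {A B : Set ℕ} {x : ℕ}

theorem clusterRel_mono (hAB : A ⊆ B) :
    ∀ {t x y}, clusterRel d α A t x y → clusterRel d α B t x y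
  | 0, _, _, h => h
  | _ + 1, _, _, h =>
    EqvGen.mono (fun _ _ => Or.imp (clusterRel_mono hAB) (closeRel_mono hAB le_rfl _ _)) _ _ h

theorem clusterRel_le_eqvGen_closeRel (hα : 1 ≤ α) :
    ∀ {t x y}, clusterRel d α A t x y → EqvGen (closeRel d A (2 * α ^ (t + 1))) x y
  | 0, x, _, rfl => .refl x
  | t + 1, _, _, h => by
    refine EqvGen.eqvGen_le (fun a b hab => ?_) _ _ h
    rcases hab with hab | hab
    · refine EqvGen.eqvGen_mono (closeRel_mono subset_rfl ?_) _ _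
        (clusterRel_le_eqvGen_closeRel hα hab)
      gcongr; omega
    · exact .rel _ _ hab

theorem eqvGen_closeRel_le_clusterRel {t x y : ℕ}
    (h : EqvGen (closeRel d A (2 * α ^ (t + 2))) x y) : clusterRel d α A (t + 1) x y :=
  EqvGen.mono (fun _ _ => Or.inr) _ _ h

theorem clusterRel_Iio_succ_of_Iic (hα : 2 ≤ α) (hsym : ∀ x y, d x y = d y x)
    (htri : ∀ x y z, d x z ≤ d x y + d y z) {i t x y : ℕ} (hx : x < i) (hy : y < i)
    (h : clusterRel d α (Set.Iic i) t x y) : clusterRel d α (Set.Iio i) (t + 1) x y := by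
  have hpos : 0 ≤ 2 * α ^ (t + 1) := by positivity
  have h' := eqvGen_closeRel_sdiff_singleton hsym htri hpos hx.ne hy.ne
    (clusterRel_le_eqvGen_closeRel (by linarith) h)
  rw [Set.Iic_sdiff_right] at h'
  refine eqvGen_closeRel_le_clusterRel (EqvGen.mono (closeRel_mono subset_rfl ?_) _ _ h')
  calc 2 * (2 * α ^ (t + 1)) ≤ 2 * (α * α ^ (t + 1)) := by gcongr
    _ = 2 * α ^ (t + 2) := by ring

theorem isLeader_of_subset (hBA : B ⊆ A) {t j : ℕ} (hj : j ∈ B)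
    (h : isLeader d α A t j) : isLeader d α B t j :=
  ⟨hj, fun y hy hjy => h.2 y (hBA hy) (clusterRel_mono hBA hjy)⟩

theorem isLeader_Iic_of_isLeader_Iio_succ (hα : 2 ≤ α) (hsym : ∀ x y, d x y = d y x)
    (htri : ∀ x y z, d x z ≤ d x y + d y z) {i t j : ℕ}
    (h : isLeader d α (Set.Iio i) (t + 1) j) : isLeader d α (Set.Iic i) t j := by
  obtain ⟨hj, hlead⟩ := h
  refine ⟨Set.Iio_subset_Iic_self hj, fun y hy hjy => ?_⟩
  rcases (Set.mem_Iic.mp hy).lt_or_eq with hyi | rfl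
  · exact hlead y hyi (clusterRel_Iio_succ_of_Iic hα hsym htri hj hyi hjy)
  · exact le_of_lt hj

theorem rank_le_rank (h : ∀ t, isLeader d α A t x → isLeader d α B t x) :
    rank d α A x ≤ rank d α B x :=
  sSup_le_sSup (Set.image_mono h)

theorem rank_le_rank_add_one (h : ∀ t, isLeader d α B (t + 1) x → isLeader d α A t x) :
    rank d α B x ≤ rank d α A x + 1 := by
  refine sSup_le ?_
  rintro _ ⟨_ | t, ht, rfl⟩
  · simp
  · calc ((t + 1 : ℕ) : ℕ∞) = (t : ℕ∞) + 1 := by push_cast; rfl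
      _ ≤ rank d α A x + 1 := by gcongr; exact le_sSup ⟨t, h t ht, rfl⟩

end clusterRel

theorem stmt_12_general (d : ℕ → ℕ → ℝ) (α : ℝ) (hα : 2 ≤ α)
    (hsym : ∀ x y, d x y = d y x)
    (htri : ∀ x y z, d x z ≤ d x y + d y z)
    (i : ℕ) (j : ℕ) (hj : j ∈ Set.Iio i) :
    rank d α (Set.Iic i) j ≤ rank d α (Set.Iio i) j ∧
    rank d α (Set.Iio i) j ≤ rank d α (Set.Iic i) j + 1 :=
  ⟨rank_le_rank fun _ => isLeader_of_subset Set.Iio_subset_Iic_self hj,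
    rank_le_rank_add_one fun _ => isLeader_Iic_of_isLeader_Iio_succ hα hsym htri⟩

/-- Ranks are monotone: `rank_i(j) ≤ rank_{i-1}(j) ≤ rank_i(j) + 1`. -/
theorem stmt_12 (d : ℕ → ℕ → ℝ) (α : ℝ) (hα : 2 ≤ α)
    (hself : ∀ x, d x x = 0) (hsym : ∀ x y, d x y = d y x)
    (htri : ∀ x y z, d x z ≤ d x y + d y z)
    (hmin : ∀ x y, x ≠ y → 2 * α ≤ d x y)
    (i : ℕ) (j : ℕ) (hj : j ∈ Set.Iio i) :
    rank d α (Set.Iic i) j ≤ rank d α (Set.Iio i) j ∧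
    rank d α (Set.Iio i) j ≤ rank d α (Set.Iic i) j + 1 :=
  stmt_12_general d α hα hsym htri i j hj
end

section
/- If vertex i arrives and its initial rank r = rank_i(i) (the largest t such that {i} remains a singleton leader through phase t of the clustering on [i]), then the distance from i to the nearest previously arrived point satisfies 2α^(r+1) ≤ d(i, [i-1]) < 2α^(r+2). -/
lemma clusterRel_refl (d : ℕ → ℕ → ℝ) (α : ℝ) (A : Set ℕ) (t : ℕ) (x : ℕ) :
    clusterRel d α A t x x := by
  cases t with
  | zero => rfl
  | succ t => exact Relation.EqvGen.refl x

lemma clusterRel_symm {d : ℕ → ℕ → ℝ} {α : ℝ} {A : Set ℕ} {t : ℕ} {x y : ℕ}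
    (h : clusterRel d α A t x y) : clusterRel d α A t y x := by
  cases t with
  | zero => exact h.symm
  | succ t => exact Relation.EqvGen.symm _ _ h

lemma clusterRel_mem {d : ℕ → ℕ → ℝ} {α : ℝ} {A : Set ℕ} {t : ℕ} {x y : ℕ}
    (h : clusterRel d α A t x y) : x = y ∨ (x ∈ A ∧ y ∈ A) := by
  induction t generalizing x y with
  | zero => exact Or.inl h
  | succ t ih =>
    induction h with
    | rel a b hab =>
      rcases hab with h1 | h2
      · exact ih h1
      · exact Or.inr ⟨h2.1, h2.2.1⟩
    | refl a => exact Or.inl rfl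
    | symm a b _ ihab =>
      rcases ihab with h1 | h2
      · exact Or.inl h1.symm
      · exact Or.inr ⟨h2.2, h2.1⟩
    | trans a b c _ _ ih1 ih2 =>
      rcases ih1 with h1 | h1 <;> rcases ih2 with h2 | h2
      · exact Or.inl (h1.trans h2)
      · exact Or.inr ⟨h1 ▸ h2.1, h2.2⟩
      · exact Or.inr ⟨h1.1, h2 ▸ h1.2⟩
      · exact Or.inr ⟨h1.1, h2.2⟩

lemma chain_lemma {d : ℕ → ℕ → ℝ} {α : ℝ} {A : Set ℕ} {r : ℕ} {i : ℕ}
    (hsym : ∀ x y, d x y = d y x)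
    (hL : ∀ z, clusterRel d α A r i z → z = i) :
    ∀ x y : ℕ, Relation.EqvGen
        (fun x y => clusterRel d α A r x y ∨ (x ∈ A ∧ y ∈ A ∧ d x y < 2 * α ^ (r + 2)))
        x y →
      x ≠ y → (x = i ∨ y = i) → ∃ j ∈ A, j ≠ i ∧ d i j < 2 * α ^ (r + 2) := by
  intro x y h
  induction h with
  | rel a b hab =>
    intro hne hi
    rcases hab with h1 | h2
    · exfalso
      rcases hi with rfl | rfl
      · exact hne (hL b h1).symm
      · exact hne (hL a (clusterRel_symm h1))
    · rcases hi with rfl | rfl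
      · exact ⟨b, h2.2.1, fun hb => hne hb.symm, h2.2.2⟩
      · exact ⟨a, h2.1, fun ha => hne ha, by rw [hsym]; exact h2.2.2⟩
  | refl a => intro hne _; exact absurd rfl hne
  | symm a b _ ih =>
    intro hne hi
    exact ih (Ne.symm hne) hi.symm
  | trans a b c _ _ ih1 ih2 =>
    intro hne hi
    rcases hi with rfl | rfl
    · by_cases hab : a = b
      · exact ih2 (hab ▸ hne) (Or.inl hab.symm)
      · exact ih1 hab (Or.inl rfl)
    · by_cases hbc : b = c
      · exact ih1 (fun h => hne (h.trans hbc)) (Or.inr hbc)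
      · exact ih2 hbc (Or.inr rfl)

/-- Initial ranks: if the rank of the newly arrived vertex `i` in `C_i` is `r`, then
`2α^(r+1) ≤ d(i, [i-1]) < 2α^(r+2)`. -/
theorem stmt_13 (d : ℕ → ℕ → ℝ) (α : ℝ) (hα : 2 ≤ α)
    (hself : ∀ x, d x x = 0) (hsym : ∀ x y, d x y = d y x)
    (htri : ∀ x y z, d x z ≤ d x y + d y z)
    (hmin : ∀ x y, x ≠ y → 2 * α ≤ d x y)
    (i : ℕ) (hi : 1 ≤ i) (r : ℕ)
    (hr : rank d α (Set.Iic i) i = (r : ℕ∞)) :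
    (∀ j < i, 2 * α ^ (r + 1) ≤ d i j) ∧ (∃ j < i, d i j < 2 * α ^ (r + 2)) := by
  set A : Set ℕ := Set.Iic i with hA
  have hiA : i ∈ A := Set.mem_Iic.2 le_rfl
  -- rank set
  set S : Set ℕ := {t | isLeader d α A t i} with hS
  have h0S : (0 : ℕ) ∈ S := by
    refine ⟨hiA, fun y hy h => ?_⟩
    exact le_of_eq h
  -- every member of S is ≤ r
  have hle : ∀ t ∈ S, t ≤ r := by
    intro t ht
    have : ((t : ℕ∞)) ≤ (r : ℕ∞) := by
      rw [← hr]
      exact le_sSup ⟨t, ht, rfl⟩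
    exact_mod_cast this
  -- i is a leader at phase r
  have hLr : isLeader d α A r i := by
    by_contra hc
    have hner : ∀ t ∈ S, t ≠ r := fun t ht he => hc (he ▸ ht)
    rcases Nat.eq_zero_or_pos r with hr0 | hrpos
    · exact hner 0 h0S hr0.symm
    · have : rank d α A i ≤ ((r - 1 : ℕ) : ℕ∞) := by
        apply sSup_le
        rintro x ⟨t, ht, rfl⟩
        have h1 : t ≤ r - 1 := Nat.le_sub_one_of_lt (lt_of_le_of_ne (hle t ht) (hner t ht))
        exact Nat.cast_le.mpr h1
      rw [hr] at this
      have : r ≤ r - 1 := by exact_mod_cast this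
      omega
  -- i is not a leader at phase r+1
  have hnL : ¬ isLeader d α A (r + 1) i := by
    intro h
    have := hle (r + 1) h
    omega
  -- singleton: any z related to i at phase r equals i
  have hsing : ∀ z, clusterRel d α A r i z → z = i := by
    intro z hz
    rcases clusterRel_mem hz with h | h
    · exact h.symm
    · exact le_antisymm (Set.mem_Iic.1 h.2) (hLr.2 z h.2 hz)
  constructor
  · -- lower bound
    intro j hj
    rcases Nat.eq_zero_or_pos r with rfl | hrpos
    · simpa using hmin i j (Nat.ne_of_gt hj)
    · by_contra hlt
      push_neg at hlt
      obtain ⟨r', rfl⟩ : ∃ r', r = r' + 1 := ⟨r - 1, by omega⟩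
      have hrel : clusterRel d α A (r' + 1) i j := by
        apply Relation.EqvGen.rel
        exact Or.inr ⟨hiA, Set.mem_Iic.2 hj.le, by
          have : r' + 1 + 1 = r' + 2 := rfl
          simpa using hlt⟩
      have := hLr.2 j (Set.mem_Iic.2 hj.le) hrel
      omega
  · -- upper bound
    rw [isLeader, not_and] at hnL
    push_neg at hnL
    obtain ⟨y, hyA, hrel, hylt⟩ := hnL hiA
    have hyi : y ≠ i := Nat.ne_of_lt hylt
    have hrel' : Relation.EqvGen
        (fun x y => clusterRel d α A r x y ∨ (x ∈ A ∧ y ∈ A ∧ d x y < 2 * α ^ (r + 2)))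
        i y := hrel
    obtain ⟨j, hjA, hji, hd⟩ := chain_lemma hsym hsing i y hrel' (Ne.symm hyi) (Or.inl rfl)
    exact ⟨j, lt_of_le_of_ne (Set.mem_Iic.1 hjA) hji, hd⟩
end

section
/- Let [i] be a finite metric space with minimum distance at least 2α, α ≥ 2, and let rank_i be the rank function of the hierarchical clustering. Setting y_C = α^t(α-1) for every cluster C ∈ C_i(t) not containing vertex 0 (and y_S = 0 otherwise) gives a feasible solution to the Steiner-tree cut dual (for every pair j,l: the sum of y_S over sets S separating j from l is at most d(j,l)), with objective value at least (α-1)·Σ_{j=1}^{i} α^(rank_i(j)). Consequently the optimal Steiner tree on [i] (rooted family containing 0) has cost at least (α-1)·Σ_{j=1}^{i} α^(rank_i(j)). -/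
open scoped Classical

/-! ### Auxiliary lemmas about `clusterRel` -/

section basic
variable {d : ℕ → ℕ → ℝ} {α : ℝ} {A : Set ℕ}

lemma cr_refl (t x : ℕ) : clusterRel d α A t x x := by
  cases t with
  | zero => rfl
  | succ t => exact Relation.EqvGen.refl x

lemma cr_symm {t x y : ℕ} (h : clusterRel d α A t x y) : clusterRel d α A t y x := by
  cases t with
  | zero => exact h.symm
  | succ t => exact Relation.EqvGen.symm x y h

lemma cr_trans {t x y z : ℕ} (h1 : clusterRel d α A t x y) (h2 : clusterRel d α A t y z) :
    clusterRel d α A t x z := by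
  cases t with
  | zero => exact h1.trans h2
  | succ t => exact Relation.EqvGen.trans x y z h1 h2

lemma cr_succ {t x y : ℕ} (h : clusterRel d α A t x y) : clusterRel d α A (t + 1) x y :=
  Relation.EqvGen.rel x y (Or.inl h)

lemma cr_mono {t t' x y : ℕ} (htt : t ≤ t') (h : clusterRel d α A t x y) :
    clusterRel d α A t' x y := by
  induction t', htt using Nat.le_induction with
  | base => exact h
  | succ n hn ih => exact cr_succ ih

lemma cr_merge {t x y : ℕ} (ht : 1 ≤ t) (hx : x ∈ A) (hy : y ∈ A)
    (hd : d x y < 2 * α ^ (t + 1)) : clusterRel d α A t x y := by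
  obtain ⟨s, rfl⟩ : ∃ s, t = s + 1 := ⟨t - 1, (Nat.succ_pred_eq_of_pos ht).symm⟩
  exact Relation.EqvGen.rel x y (Or.inr ⟨hx, hy, hd⟩)

lemma cr_far (hmin : ∀ x y, x ≠ y → 2 * α ≤ d x y) {t x y : ℕ}
    (hx : x ∈ A) (hy : y ∈ A) (hne : x ≠ y) (h : ¬ clusterRel d α A t x y) :
    2 * α ^ (t + 1) ≤ d x y := by
  cases t with
  | zero => simpa using hmin x y hne
  | succ t =>
    by_contra hlt
    push_neg at hlt
    exact h (cr_merge (Nat.succ_le_succ (Nat.zero_le t)) hx hy hlt)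

lemma leader_anti {t t' j : ℕ} (h : t ≤ t') (hl : isLeader d α A t' j) : isLeader d α A t j :=
  ⟨hl.1, fun y hy hrel => hl.2 y hy (cr_mono h hrel)⟩

lemma leader_zero {j : ℕ} (hjA : j ∈ A) : isLeader d α A 0 j :=
  ⟨hjA, fun _ _ h => le_of_eq h⟩

lemma leader_attained {ρj j : ℕ} (hjA : j ∈ A)
    (hrank : (ρj : ℕ∞) = rank d α A j) : isLeader d α A ρj j := by
  by_contra hnot
  have h0 : ρj ≠ 0 := by
    intro h
    exact hnot (h ▸ leader_zero hjA)
  have h1 : rank d α A j ≤ ((ρj - 1 : ℕ) : ℕ∞) := by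
    apply sSup_le
    rintro x ⟨t, ht, rfl⟩
    have hslt : t < ρj := by
      by_contra hge
      push_neg at hge
      exact hnot (leader_anti hge ht)
    show ((t : ℕ∞) ≤ _)
    exact_mod_cast Nat.le_sub_one_of_lt hslt
  rw [← hrank] at h1
  have h2 : ρj ≤ ρj - 1 := Nat.cast_le.mp h1
  omega

lemma not_rel_zero_of_leader {t j : ℕ} (h0A : (0 : ℕ) ∈ A) (hj : 1 ≤ j)
    (hl : isLeader d α A t j) : ¬ clusterRel d α A t j 0 :=
  fun hrel => absurd (hl.2 0 h0A hrel) (by omega)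

end basic

/-! ### Cluster finsets and distance to clusters -/

noncomputable def clF (d : ℕ → ℕ → ℝ) (α : ℝ) (i t j : ℕ) : Finset ℕ :=
  insert j ((Finset.range (i + 1)).filter (fun c => clusterRel d α (Set.Iic i) t j c))

lemma clF_nonempty {d : ℕ → ℕ → ℝ} {α : ℝ} {i t j : ℕ} : (clF d α i t j).Nonempty :=
  ⟨j, Finset.mem_insert_self _ _⟩

noncomputable def hD (d : ℕ → ℕ → ℝ) (α : ℝ) (i t j x : ℕ) : ℝ :=
  (clF d α i t j).inf' clF_nonempty (fun c => d x c)

section clf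
variable {d : ℕ → ℕ → ℝ} {α : ℝ} {i : ℕ}

lemma st14_dnn (hself : ∀ x, d x x = 0) (hsym : ∀ x y, d x y = d y x)
    (htri : ∀ x y z, d x z ≤ d x y + d y z) (x y : ℕ) : 0 ≤ d x y := by
  have h := htri x y x
  rw [hself x, hsym y x] at h
  linarith

lemma clF_rel {t j c : ℕ} (hc : c ∈ clF d α i t j) : clusterRel d α (Set.Iic i) t j c := by
  rcases Finset.mem_insert.mp hc with rfl | hc'
  · exact cr_refl t c
  · exact (Finset.mem_filter.mp hc').2

lemma clF_le {t j c : ℕ} (hj : j ≤ i) (hc : c ∈ clF d α i t j) : c ≤ i := by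
  rcases Finset.mem_insert.mp hc with rfl | hc'
  · exact hj
  · exact Nat.lt_succ_iff.mp (Finset.mem_range.mp (Finset.mem_filter.mp hc').1)

lemma clF_mem_of {t j c : ℕ} (hc : c ≤ i) (h : clusterRel d α (Set.Iic i) t j c) :
    c ∈ clF d α i t j :=
  Finset.mem_insert_of_mem
    (Finset.mem_filter.mpr ⟨Finset.mem_range.mpr (Nat.lt_succ_of_le hc), h⟩)

lemma hD_le {t j x c : ℕ} (hc : c ∈ clF d α i t j) : hD d α i t j x ≤ d x c :=
  Finset.inf'_le _ hc

lemma hD_exists (t j x : ℕ) : ∃ c ∈ clF d α i t j, hD d α i t j x = d x c :=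
  Finset.exists_mem_eq_inf' _ _

lemma hD_nonneg (dnn : ∀ x y, 0 ≤ d x y) (t j x : ℕ) : 0 ≤ hD d α i t j x := by
  obtain ⟨c, _, hEq⟩ := hD_exists (d := d) (α := α) (i := i) t j x
  rw [hEq]; exact dnn x c

lemma hD_self (hself : ∀ x, d x x = 0) (dnn : ∀ x y, 0 ≤ d x y) (t j : ℕ) :
    hD d α i t j j = 0 :=
  le_antisymm (by
    have h := hD_le (d := d) (α := α) (i := i) (t := t) (x := j)
      (Finset.mem_insert_self j _)
    rwa [hself j] at h)
    (hD_nonneg dnn t j j)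

lemma hD_lip (htri : ∀ x y z, d x z ≤ d x y + d y z) (t j x y : ℕ) :
    hD d α i t j x ≤ d x y + hD d α i t j y := by
  obtain ⟨c, hc, hEq⟩ := hD_exists (d := d) (α := α) (i := i) t j y
  calc hD d α i t j x ≤ d x c := hD_le hc
    _ ≤ d x y + d y c := htri x y c
    _ = d x y + hD d α i t j y := by rw [hEq]

lemma hD_far (hmin : ∀ x y, x ≠ y → 2 * α ≤ d x y) (hsym : ∀ x y, d x y = d y x)
    {t j x : ℕ} (hj : j ≤ i) (hx : x ≤ i) (hnr : ¬ clusterRel d α (Set.Iic i) t j x) :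
    2 * α ^ (t + 1) ≤ hD d α i t j x := by
  apply Finset.le_inf'
  intro c hc
  have hrel := clF_rel hc
  have hci := clF_le hj hc
  have hne : c ≠ x := fun h => hnr (h ▸ hrel)
  have hnr2 : ¬ clusterRel d α (Set.Iic i) t c x := fun h => hnr (cr_trans hrel h)
  have := cr_far hmin (Set.mem_Iic.mpr hci) (Set.mem_Iic.mpr hx) hne hnr2
  rw [hsym c x] at this
  exact this

lemma clF_subset {t t' j j' : ℕ} (hj : j ≤ i) (htt : t ≤ t')
    (hrel : clusterRel d α (Set.Iic i) t' j' j) :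
    clF d α i t j ⊆ clF d α i t' j' := fun c hc =>
  clF_mem_of (clF_le hj hc) (cr_trans hrel (cr_mono htt (clF_rel hc)))

lemma hD_anti {t t' j j' : ℕ} (hsub : clF d α i t j ⊆ clF d α i t' j') (x : ℕ) :
    hD d α i t' j' x ≤ hD d α i t j x := by
  obtain ⟨c, hc, hEq⟩ := hD_exists (d := d) (α := α) (i := i) t j x
  rw [hEq]
  exact hD_le (hsub hc)

lemma clF_sep (hmin : ∀ x y, x ≠ y → 2 * α ≤ d x y) {t t' j j' : ℕ}
    (hj : j ≤ i) (hj' : j' ≤ i) (htt : t ≤ t')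
    (hnr : ¬ clusterRel d α (Set.Iic i) t' j j')
    {c c' : ℕ} (hc : c ∈ clF d α i t j) (hc' : c' ∈ clF d α i t' j') :
    2 * α ^ (t' + 1) ≤ d c c' := by
  have h1 : clusterRel d α (Set.Iic i) t' j c := cr_mono htt (clF_rel hc)
  have h2 : clusterRel d α (Set.Iic i) t' j' c' := clF_rel hc'
  have hne : c ≠ c' := by
    rintro rfl
    exact hnr (cr_trans h1 (cr_symm h2))
  have hnr2 : ¬ clusterRel d α (Set.Iic i) t' c c' := fun h =>
    hnr (cr_trans (cr_trans h1 h) (cr_symm h2))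
  exact cr_far hmin (Set.mem_Iic.mpr (clF_le hj hc)) (Set.mem_Iic.mpr (clF_le hj' hc'))
    hne hnr2

end clf

/-! ### Interval arithmetic helpers -/

lemma endLe {a b m X : ℝ} (hz : 0 < max 0 (min b X - max a m)) :
    max (a - m) 0 + max 0 (min b X - max a m) ≤ min b X - m := by
  have hz' : 0 < min b X - max a m := (lt_max_iff.mp hz).resolve_left (lt_irrefl 0)
  rcases le_total a m with h | h
  · rw [max_eq_right (by linarith : a - m ≤ 0), max_eq_right (le_of_lt hz')]
    rw [max_eq_right h] at hz' ⊢
    linarith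
  · rw [max_eq_left (by linarith : 0 ≤ a - m), max_eq_right (le_of_lt hz')]
    rw [max_eq_left h] at hz' ⊢
    linarith

lemma z_pos_lt {a b m X : ℝ} (hz : 0 < max 0 (min b X - max a m)) : m < b ∧ a < X := by
  have hz' : 0 < min b X - max a m := (lt_max_iff.mp hz).resolve_left (lt_irrefl 0)
  constructor
  · linarith [min_le_left b X, le_max_right a m]
  · linarith [min_le_right b X, le_max_left a m]

lemma ofReal_max_zero (x : ℝ) : ENNReal.ofReal (max 0 x) = ENNReal.ofReal x := by
  rcases le_total x 0 with h | h
  · rw [max_eq_left h, ENNReal.ofReal_zero, ENNReal.ofReal_eq_zero.mpr h]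
  · rw [max_eq_right h]

/-! ### Moat overlaps with an edge -/

noncomputable def zval (d : ℕ → ℕ → ℝ) (α : ℝ) (i u v j t : ℕ) : ℝ :=
  max 0 (min (α ^ (t + 1) - 1) (max (hD d α i t j u) (hD d α i t j v))
    - max (α ^ t - 1) (min (hD d α i t j u) (hD d α i t j v)))

noncomputable def ival (d : ℕ → ℕ → ℝ) (α : ℝ) (i : ℕ) (L : ℝ) (u v j t : ℕ) : Set ℝ :=
  if hD d α i t j u ≤ hD d α i t j v then
    Set.Ico (max (α ^ t - 1 - hD d α i t j u) 0)
      (max (α ^ t - 1 - hD d α i t j u) 0 + zval d α i u v j t)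
  else
    Set.Ico (L - max (α ^ t - 1 - hD d α i t j v) 0 - zval d α i u v j t)
      (L - max (α ^ t - 1 - hD d α i t j v) 0)

section zi
variable {d : ℕ → ℕ → ℝ} {α : ℝ} {i : ℕ}

lemma zval_nonneg (u v j t : ℕ) : 0 ≤ zval d α i u v j t := le_max_left _ _

lemma zval_u (u v j t : ℕ) (hor : hD d α i t j u ≤ hD d α i t j v) :
    zval d α i u v j t =
      max 0 (min (α ^ (t + 1) - 1) (hD d α i t j v) - max (α ^ t - 1) (hD d α i t j u)) := by
  unfold zval
  rw [min_eq_left hor, max_eq_right hor]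

lemma zval_v (u v j t : ℕ) (hor : hD d α i t j v ≤ hD d α i t j u) :
    zval d α i u v j t =
      max 0 (min (α ^ (t + 1) - 1) (hD d α i t j u) - max (α ^ t - 1) (hD d α i t j v)) := by
  unfold zval
  rw [min_eq_right hor, max_eq_left hor]

lemma vol_ival (L : ℝ) (u v j t : ℕ) :
    MeasureTheory.volume (ival d α i L u v j t) = ENNReal.ofReal (zval d α i u v j t) := by
  unfold ival
  split
  · rw [Real.volume_Ico, add_sub_cancel_left]
  · rw [Real.volume_Ico]
    congr 1
    ring

lemma ival_empty {L : ℝ} {u v j t : ℕ} (hz : zval d α i u v j t ≤ 0) :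
    ival d α i L u v j t = ∅ := by
  unfold ival
  split <;> apply Set.Ico_eq_empty <;> intro hlt <;> linarith

lemma ival_measurable (L : ℝ) (u v j t : ℕ) : MeasurableSet (ival d α i L u v j t) := by
  unfold ival
  split <;> exact measurableSet_Ico

lemma ival_subset (hself : ∀ x, d x x = 0) (hsym : ∀ x y, d x y = d y x)
    (htri : ∀ x y z, d x z ≤ d x y + d y z) (u v j t : ℕ) :
    ival d α i (d u v) u v j t ⊆ Set.Icc 0 (d u v) := by
  have hlip1 : hD d α i t j u ≤ d u v + hD d α i t j v := hD_lip htri t j u v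
  have hlip2 : hD d α i t j v ≤ d u v + hD d α i t j u := by
    have := hD_lip (d := d) (α := α) (i := i) htri t j v u
    rwa [hsym v u] at this
  unfold ival
  split
  case isTrue hor =>
    intro x hx
    obtain ⟨hx1, hx2⟩ := hx
    have hz : 0 < zval d α i u v j t := by
      by_contra hc
      push_neg at hc
      linarith
    rw [zval_u u v j t hor] at hz hx2
    have he := endLe hz
    have hm := min_le_right (α ^ (t + 1) - 1) (hD d α i t j v)
    constructor
    · exact le_trans (le_max_right _ _) hx1
    · linarith
  case isFalse hor =>
    push_neg at hor
    intro x hx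
    obtain ⟨hx1, hx2⟩ := hx
    have hz : 0 < zval d α i u v j t := by
      by_contra hc
      push_neg at hc
      linarith
    rw [zval_v u v j t (le_of_lt hor)] at hz hx1
    have he := endLe hz
    have hm := min_le_right (α ^ (t + 1) - 1) (hD d α i t j u)
    constructor
    · linarith
    · have := le_max_right (α ^ t - 1 - hD d α i t j v) 0
      linarith

end zi

section disj
variable {d : ℕ → ℕ → ℝ} {α : ℝ} {i : ℕ}

lemma ival_disjoint_aux (hα : 2 ≤ α) (hsym : ∀ x y, d x y = d y x)
    (htri : ∀ x y z, d x z ≤ d x y + d y z) (hmin : ∀ x y, x ≠ y → 2 * α ≤ d x y)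
    {u v j j' t t' : ℕ}
    (hji : j ≤ i) (hj'i : j' ≤ i)
    (hLj : isLeader d α (Set.Iic i) t j) (hLj' : isLeader d α (Set.Iic i) t' j')
    (htt : t ≤ t') (hne : ¬ (j = j' ∧ t = t')) :
    Disjoint (ival d α i (d u v) u v j t) (ival d α i (d u v) u v j' t') := by
  have hα1 : (1 : ℝ) ≤ α := by linarith
  by_cases hzp : zval d α i u v j t ≤ 0
  · rw [ival_empty hzp]; exact Set.empty_disjoint _
  by_cases hzq : zval d α i u v j' t' ≤ 0
  · rw [ival_empty hzq]; exact Set.disjoint_empty _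
  push_neg at hzp hzq
  have hppow : α ^ (t + 1) ≤ α ^ (t' + 1) := pow_le_pow_right₀ hα1 (by omega)
  set hu := hD d α i t j u with hhu
  set hv := hD d α i t j v with hhv
  set hu' := hD d α i t' j' u with hhu'
  set hv' := hD d α i t' j' v with hhv'
  by_cases hrel : clusterRel d α (Set.Iic i) t' j j'
  · -- nested clusters
    have htlt : t < t' := by
      rcases lt_or_eq_of_le htt with h | h
      · exact h
      · exfalso
        subst h
        exact hne ⟨le_antisymm (hLj.2 j' (Set.mem_Iic.mpr hj'i) hrel)
          (hLj'.2 j (Set.mem_Iic.mpr hji) (cr_symm hrel)), rfl⟩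
    have hsub := clF_subset (d := d) (α := α) hji htt (cr_symm hrel)
    have hau : hu' ≤ hu := hD_anti hsub u
    have hav : hv' ≤ hv := hD_anti hsub v
    have hba : α ^ (t + 1) ≤ α ^ t' := pow_le_pow_right₀ hα1 (by omega)
    unfold ival
    by_cases hor : hu ≤ hv <;> by_cases hor' : hu' ≤ hv'
    · -- both near u
      rw [if_pos hor, if_pos hor']
      rw [zval_u u v j t hor] at hzp
      rw [zval_u u v j' t' hor'] at hzq
      have e1 := endLe hzp
      have e2 : min (α ^ (t + 1) - 1) hv ≤ α ^ (t + 1) - 1 := min_le_left _ _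
      refine Set.disjoint_left.mpr fun x hx hx' => ?_
      obtain ⟨hx1, hx2⟩ := hx
      obtain ⟨hx'1, hx'2⟩ := hx'
      rw [zval_u u v j t hor] at hx2
      have e3 : α ^ t' - 1 - hu' ≤ max (α ^ t' - 1 - hu') 0 := le_max_left _ _
      linarith
    · -- p near u, q near v : impossible
      exfalso
      push_neg at hor'
      rw [zval_u u v j t hor] at hzp
      rw [zval_v u v j' t' (le_of_lt hor')] at hzq
      obtain ⟨h1, _⟩ := z_pos_lt hzp
      obtain ⟨_, h2⟩ := z_pos_lt hzq
      linarith
    · -- p near v, q near u : impossible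
      exfalso
      push_neg at hor
      rw [zval_v u v j t (le_of_lt hor)] at hzp
      rw [zval_u u v j' t' hor'] at hzq
      obtain ⟨h1, _⟩ := z_pos_lt hzp
      obtain ⟨_, h2⟩ := z_pos_lt hzq
      linarith
    · -- both near v
      push_neg at hor hor'
      rw [if_neg (not_le.mpr hor), if_neg (not_le.mpr hor')]
      rw [zval_v u v j t (le_of_lt hor)] at hzp
      rw [zval_v u v j' t' (le_of_lt hor')] at hzq
      have e1 := endLe hzp
      have e2 : min (α ^ (t + 1) - 1) hu ≤ α ^ (t + 1) - 1 := min_le_left _ _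
      refine Set.disjoint_left.mpr fun x hx hx' => ?_
      obtain ⟨hx1, hx2⟩ := hx
      obtain ⟨hx'1, hx'2⟩ := hx'
      rw [zval_v u v j t (le_of_lt hor)] at hx1
      have e3 : α ^ t' - 1 - hv' ≤ max (α ^ t' - 1 - hv') 0 := le_max_left _ _
      linarith
  · -- disjoint clusters
    have huu' : 2 * α ^ (t' + 1) ≤ hu + hu' := by
      obtain ⟨c, hc, hce⟩ := hD_exists (d := d) (α := α) (i := i) t j u
      obtain ⟨c', hc', hce'⟩ := hD_exists (d := d) (α := α) (i := i) t' j' u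
      calc 2 * α ^ (t' + 1) ≤ d c c' := clF_sep hmin hji hj'i htt hrel hc hc'
        _ ≤ d c u + d u c' := htri c u c'
        _ = hu + hu' := by rw [hsym c u, hhu, hhu', hce, hce']
    have hvv' : 2 * α ^ (t' + 1) ≤ hv + hv' := by
      obtain ⟨c, hc, hce⟩ := hD_exists (d := d) (α := α) (i := i) t j v
      obtain ⟨c', hc', hce'⟩ := hD_exists (d := d) (α := α) (i := i) t' j' v
      calc 2 * α ^ (t' + 1) ≤ d c c' := clF_sep hmin hji hj'i htt hrel hc hc'
        _ ≤ d c v + d v c' := htri c v c'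
        _ = hv + hv' := by rw [hsym c v, hhv, hhv', hce, hce']
    have hlip1 : hu' ≤ d u v + hv' := hD_lip htri t' j' u v
    have hlip2 : hv' ≤ d u v + hu' := by
      have := hD_lip (d := d) (α := α) (i := i) htri t' j' v u
      rwa [hsym v u] at this
    unfold ival
    by_cases hor : hu ≤ hv <;> by_cases hor' : hu' ≤ hv'
    · -- both near u : impossible
      exfalso
      rw [zval_u u v j t hor] at hzp
      rw [zval_u u v j' t' hor'] at hzq
      obtain ⟨h1, _⟩ := z_pos_lt hzp
      obtain ⟨h2, _⟩ := z_pos_lt hzq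
      linarith
    · -- p near u, q near v
      push_neg at hor'
      rw [if_pos hor, if_neg (not_le.mpr hor')]
      rw [zval_u u v j t hor] at hzp
      rw [zval_v u v j' t' (le_of_lt hor')] at hzq
      have e1 := endLe hzp
      have e2 := endLe hzq
      have m1 : min (α ^ (t + 1) - 1) hv ≤ α ^ (t + 1) - 1 := min_le_left _ _
      have m2 : min (α ^ (t' + 1) - 1) hu' ≤ α ^ (t' + 1) - 1 := min_le_left _ _
      refine Set.disjoint_left.mpr fun x hx hx' => ?_
      obtain ⟨hx1, hx2⟩ := hx
      obtain ⟨hx'1, hx'2⟩ := hx'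
      rw [zval_u u v j t hor] at hx2
      rw [zval_v u v j' t' (le_of_lt hor')] at hx'1
      linarith
    · -- p near v, q near u
      push_neg at hor
      rw [if_neg (not_le.mpr hor), if_pos hor']
      rw [zval_v u v j t (le_of_lt hor)] at hzp
      rw [zval_u u v j' t' hor'] at hzq
      have e1 := endLe hzp
      have e2 := endLe hzq
      have m1 : min (α ^ (t + 1) - 1) hu ≤ α ^ (t + 1) - 1 := min_le_left _ _
      have m2 : min (α ^ (t' + 1) - 1) hv' ≤ α ^ (t' + 1) - 1 := min_le_left _ _
      refine Set.disjoint_left.mpr fun x hx hx' => ?_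
      obtain ⟨hx1, hx2⟩ := hx
      obtain ⟨hx'1, hx'2⟩ := hx'
      rw [zval_v u v j t (le_of_lt hor)] at hx1
      rw [zval_u u v j' t' hor'] at hx'2
      linarith
    · -- both near v : impossible
      exfalso
      push_neg at hor hor'
      rw [zval_v u v j t (le_of_lt hor)] at hzp
      rw [zval_v u v j' t' (le_of_lt hor')] at hzq
      obtain ⟨h1, _⟩ := z_pos_lt hzp
      obtain ⟨h2, _⟩ := z_pos_lt hzq
      linarith

end disj

section assemble
variable {d : ℕ → ℕ → ℝ} {α : ℝ} {i : ℕ}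

lemma ival_disjoint (hα : 2 ≤ α) (hsym : ∀ x y, d x y = d y x)
    (htri : ∀ x y z, d x z ≤ d x y + d y z) (hmin : ∀ x y, x ≠ y → 2 * α ≤ d x y)
    {u v j j' t t' : ℕ} (hji : j ≤ i) (hj'i : j' ≤ i)
    (hLj : isLeader d α (Set.Iic i) t j) (hLj' : isLeader d α (Set.Iic i) t' j')
    (hne : ¬ (j = j' ∧ t = t')) :
    Disjoint (ival d α i (d u v) u v j t) (ival d α i (d u v) u v j' t') := by
  rcases le_total t t' with h | h
  · exact ival_disjoint_aux hα hsym htri hmin hji hj'i hLj hLj' h hne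
  · exact (ival_disjoint_aux hα hsym htri hmin hj'i hji hLj' hLj h
      (fun hh => hne ⟨hh.1.symm, hh.2.symm⟩)).symm

lemma edge_bound (hα : 2 ≤ α) (hself : ∀ x, d x x = 0) (hsym : ∀ x y, d x y = d y x)
    (htri : ∀ x y z, d x z ≤ d x y + d y z) (hmin : ∀ x y, x ≠ y → 2 * α ≤ d x y)
    (ρ : ℕ → ℕ)
    (hlead : ∀ j, 1 ≤ j → j ≤ i → ∀ t, t ≤ ρ j → isLeader d α (Set.Iic i) t j)
    (u v : ℕ) :
    ∑ j ∈ Finset.Icc 1 i, ∑ t ∈ Finset.range (ρ j + 1), zval d α i u v j t ≤ d u v := by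
  have dnn := st14_dnn hself hsym htri
  have hsum : ∑ j ∈ Finset.Icc 1 i, ∑ t ∈ Finset.range (ρ j + 1), zval d α i u v j t
      = ∑ p ∈ (Finset.Icc 1 i).sigma (fun j => Finset.range (ρ j + 1)),
          zval d α i u v p.1 p.2 := Finset.sum_sigma' _ _ _
  rw [hsum]
  set F := (Finset.Icc 1 i).sigma (fun j => Finset.range (ρ j + 1)) with hF
  have hdisj : (↑F : Set (Σ _ : ℕ, ℕ)).PairwiseDisjoint
      (fun p => ival d α i (d u v) u v p.1 p.2) := by
    rintro ⟨j, t⟩ hp ⟨j', t'⟩ hq hpq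
    rw [Finset.mem_coe, hF, Finset.mem_sigma, Finset.mem_Icc, Finset.mem_range] at hp hq
    refine ival_disjoint hα hsym htri hmin hp.1.2 hq.1.2
      (hlead j hp.1.1 hp.1.2 t (Nat.lt_succ_iff.mp hp.2)) (hlead j' hq.1.1 hq.1.2 t' (Nat.lt_succ_iff.mp hq.2)) ?_
    rintro ⟨rfl, rfl⟩
    exact hpq rfl
  have hkey : ∑ p ∈ F, ENNReal.ofReal (zval d α i u v p.1 p.2) ≤ ENNReal.ofReal (d u v) := by
    calc ∑ p ∈ F, ENNReal.ofReal (zval d α i u v p.1 p.2)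
        = ∑ p ∈ F, MeasureTheory.volume (ival d α i (d u v) u v p.1 p.2) :=
          Finset.sum_congr rfl (fun p _ => (vol_ival _ _ _ _ _).symm)
      _ = MeasureTheory.volume (⋃ p ∈ F, ival d α i (d u v) u v p.1 p.2) :=
          (MeasureTheory.measure_biUnion_finset hdisj
            (fun p _ => ival_measurable _ _ _ _ _)).symm
      _ ≤ MeasureTheory.volume (Set.Icc 0 (d u v)) := by
          apply MeasureTheory.measure_mono
          apply Set.iUnion₂_subset
          intro p _
          exact ival_subset hself hsym htri u v p.1 p.2
      _ = ENNReal.ofReal (d u v - 0) := Real.volume_Icc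
      _ = ENNReal.ofReal (d u v) := by rw [sub_zero]
  rw [← ENNReal.ofReal_sum_of_nonneg (fun p _ => zval_nonneg _ _ _ _)] at hkey
  exact (ENNReal.ofReal_le_ofReal_iff (dnn u v)).mp hkey

lemma cross_bound (hα : 2 ≤ α) (hself : ∀ x, d x x = 0) (hsym : ∀ x y, d x y = d y x)
    (htri : ∀ x y z, d x z ≤ d x y + d y z) (hmin : ∀ x y, x ≠ y → 2 * α ≤ d x y)
    {E : Finset (ℕ × ℕ)} {j t : ℕ} (hj1 : 1 ≤ j) (hji : j ≤ i)
    (hL : isLeader d α (Set.Iic i) t j)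
    (hreach : (SimpleGraph.fromEdgeSet
      ((fun p : ℕ × ℕ => s(p.1, p.2)) '' ↑E)).Reachable j 0) :
    α ^ t * (α - 1) ≤ ∑ e ∈ E, zval d α i e.1 e.2 j t := by
  have dnn := st14_dnn hself hsym htri
  have hα1 : (1 : ℝ) ≤ α := by linarith
  have hα0 : (0 : ℝ) < α := by linarith
  have hnr0 : ¬ clusterRel d α (Set.Iic i) t j 0 :=
    not_rel_zero_of_leader (Set.mem_Iic.mpr (Nat.zero_le i)) hj1 hL
  have h0far : 2 * α ^ (t + 1) ≤ hD d α i t j 0 :=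
    hD_far hmin hsym hji (Nat.zero_le i) hnr0
  have hpow1 : (1 : ℝ) ≤ α ^ t := one_le_pow₀ hα1
  have hpow1' : (1 : ℝ) ≤ α ^ (t + 1) := one_le_pow₀ hα1
  have hb0 : α ^ (t + 1) - 1 < hD d α i t j 0 := by
    have : (0 : ℝ) < α ^ (t + 1) := pow_pos hα0 _
    linarith
  have hcov : ∀ c ∈ Set.Ico (α ^ t - 1) (α ^ (t + 1) - 1), ∃ e ∈ E,
      min (hD d α i t j e.1) (hD d α i t j e.2) ≤ c ∧
      c ≤ max (hD d α i t j e.1) (hD d α i t j e.2) := by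
    intro c hc
    obtain ⟨hc1, hc2⟩ := hc
    obtain ⟨W⟩ := hreach
    have key : ∀ (x y : ℕ)
        (_ : (SimpleGraph.fromEdgeSet ((fun p : ℕ × ℕ => s(p.1, p.2)) '' ↑E)).Walk x y),
        hD d α i t j x ≤ c → c < hD d α i t j y → ∃ e ∈ E,
        min (hD d α i t j e.1) (hD d α i t j e.2) ≤ c ∧
        c ≤ max (hD d α i t j e.1) (hD d α i t j e.2) := by
      intro x y' W
      induction W with
      | nil => intro hx hy; exfalso; linarith
      | @cons x y _ hadj W ih =>
        intro hx hend
        by_cases hy : hD d α i t j y ≤ c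
        · exact ih hy hend
        · push_neg at hy
          rw [SimpleGraph.fromEdgeSet_adj] at hadj
          obtain ⟨hmem, hxy⟩ := hadj
          obtain ⟨p, hpE, hps⟩ := hmem
          refine ⟨p, hpE, ?_, ?_⟩
          · rcases Sym2.eq_iff.mp hps with ⟨h1, h2⟩ | ⟨h1, h2⟩
            · rw [h1, h2]; exact le_trans (min_le_left _ _) hx
            · rw [h1, h2]; exact le_trans (min_le_right _ _) hx
          · rcases Sym2.eq_iff.mp hps with ⟨h1, h2⟩ | ⟨h1, h2⟩
            · rw [h1, h2]; exact le_trans (le_of_lt hy) (le_max_right _ _)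
            · rw [h1, h2]; exact le_trans (le_of_lt hy) (le_max_left _ _)
    apply key j 0 W
    · rw [hD_self hself dnn t j]
      linarith
    · linarith
  have hmain : ENNReal.ofReal (α ^ (t + 1) - 1 - (α ^ t - 1)) ≤
      ∑ e ∈ E, ENNReal.ofReal (zval d α i e.1 e.2 j t) := by
    calc ENNReal.ofReal (α ^ (t + 1) - 1 - (α ^ t - 1))
        = MeasureTheory.volume (Set.Ico (α ^ t - 1) (α ^ (t + 1) - 1)) :=
          (Real.volume_Ico).symm
      _ ≤ MeasureTheory.volume (⋃ e ∈ E,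
            Set.Icc (max (α ^ t - 1) (min (hD d α i t j e.1) (hD d α i t j e.2)))
              (min (α ^ (t + 1) - 1) (max (hD d α i t j e.1) (hD d α i t j e.2)))) := by
          apply MeasureTheory.measure_mono
          intro c hc
          obtain ⟨e, heE, h1, h2⟩ := hcov c hc
          refine Set.mem_biUnion heE ⟨max_le hc.1 h1, le_min (le_of_lt hc.2) h2⟩
      _ ≤ ∑ e ∈ E, MeasureTheory.volume
            (Set.Icc (max (α ^ t - 1) (min (hD d α i t j e.1) (hD d α i t j e.2)))
              (min (α ^ (t + 1) - 1) (max (hD d α i t j e.1) (hD d α i t j e.2)))) :=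
          MeasureTheory.measure_biUnion_finset_le E _
      _ = ∑ e ∈ E, ENNReal.ofReal (zval d α i e.1 e.2 j t) := by
          refine Finset.sum_congr rfl (fun e _ => ?_)
          rw [Real.volume_Icc]
          unfold zval
          rw [ofReal_max_zero]
  rw [← ENNReal.ofReal_sum_of_nonneg (fun e _ => zval_nonneg _ _ _ _)] at hmain
  have hfin := (ENNReal.ofReal_le_ofReal_iff
    (Finset.sum_nonneg (fun e _ => zval_nonneg _ _ _ _))).mp hmain
  calc α ^ t * (α - 1) = α ^ (t + 1) - 1 - (α ^ t - 1) := by ring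
    _ ≤ _ := hfin

end assemble

/-- The moat duals `y_C = α^t(α-1)` (for clusters `C ∈ C_i(t)` not containing the
root `0`) are feasible for the Steiner-tree cut dual, and consequently the cost of
any network (possibly using Steiner points) connecting all terminals of `[i]` is at
least `(α-1)·Σ_{j=1}^{i} α^(rank_i(j))`. -/
theorem stmt_14 (d : ℕ → ℕ → ℝ) (α : ℝ) (hα : 2 ≤ α)
    (hself : ∀ x, d x x = 0) (hsym : ∀ x y, d x y = d y x)
    (htri : ∀ x y z, d x z ≤ d x y + d y z)
    (hmin : ∀ x y, x ≠ y → 2 * α ≤ d x y)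
    (i : ℕ) (ρ : ℕ → ℕ)
    (hρ : ∀ j, 1 ≤ j → j ≤ i → (ρ j : ℕ∞) = rank d α (Set.Iic i) j) :
    -- feasibility of the dual: for every pair j ≠ l of points of [i], the total dual
    -- value of clusters (over all phases) separating j from l and avoiding 0 is ≤ d(j,l)
    (∀ j l : ℕ, j ≤ i → l ≤ i → j ≠ l → ∀ T : ℕ,
      ∑ t ∈ Finset.range (T + 1), (α ^ t * (α - 1)) *
        (((if ¬ clusterRel d α (Set.Iic i) t j l ∧ ¬ clusterRel d α (Set.Iic i) t j 0
            then 1 else 0 : ℝ)) +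
         ((if ¬ clusterRel d α (Set.Iic i) t j l ∧ ¬ clusterRel d α (Set.Iic i) t l 0
            then 1 else 0 : ℝ)))
        ≤ d j l) ∧
    -- the lower bound on the cost of any Steiner tree (indeed any connecting network)
    (∀ E : Finset (ℕ × ℕ),
      (∀ j l : ℕ, j ≤ i → l ≤ i →
        (SimpleGraph.fromEdgeSet ((fun p : ℕ × ℕ => s(p.1, p.2)) '' ↑E)).Reachable j l) →
      (α - 1) * ∑ j ∈ Finset.Icc 1 i, α ^ (ρ j) ≤ ∑ e ∈ E, d e.1 e.2) := by
  have hα1 : (1 : ℝ) ≤ α := by linarith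
  have hw : ∀ t : ℕ, (0 : ℝ) ≤ α ^ t * (α - 1) := fun t =>
    mul_nonneg (pow_nonneg (by linarith) t) (by linarith)
  constructor
  · -- dual feasibility
    intro j l hji hli hjl T
    set S := (Finset.range (T + 1)).filter
      (fun t => ¬ clusterRel d α (Set.Iic i) t j l) with hS
    have h0S : 0 ∈ S := by
      rw [hS, Finset.mem_filter]
      exact ⟨Finset.mem_range.mpr (by omega), fun h => hjl h⟩
    have hSne : S.Nonempty := ⟨0, h0S⟩
    set t0 := S.max' hSne with ht0
    have ht0S : t0 ∈ S := S.max'_mem hSne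
    have hnr : ¬ clusterRel d α (Set.Iic i) t0 j l := (Finset.mem_filter.mp ht0S).2
    have hfar : 2 * α ^ (t0 + 1) ≤ d j l :=
      cr_far hmin (Set.mem_Iic.mpr hji) (Set.mem_Iic.mpr hli) hjl hnr
    have h1 : ∑ t ∈ Finset.range (T + 1), (α ^ t * (α - 1)) *
        (((if ¬ clusterRel d α (Set.Iic i) t j l ∧ ¬ clusterRel d α (Set.Iic i) t j 0
            then 1 else 0 : ℝ)) +
         ((if ¬ clusterRel d α (Set.Iic i) t j l ∧ ¬ clusterRel d α (Set.Iic i) t l 0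
            then 1 else 0 : ℝ)))
        = ∑ t ∈ S, (α ^ t * (α - 1)) *
        (((if ¬ clusterRel d α (Set.Iic i) t j l ∧ ¬ clusterRel d α (Set.Iic i) t j 0
            then 1 else 0 : ℝ)) +
         ((if ¬ clusterRel d α (Set.Iic i) t j l ∧ ¬ clusterRel d α (Set.Iic i) t l 0
            then 1 else 0 : ℝ))) := by
      refine (Finset.sum_subset (Finset.filter_subset _ _) ?_).symm
      intro t ht htS
      have hrelt : clusterRel d α (Set.Iic i) t j l := by
        by_contra hc
        exact htS (Finset.mem_filter.mpr ⟨ht, hc⟩)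
      simp [hrelt]
    rw [h1]
    have h2 : ∑ t ∈ S, (α ^ t * (α - 1)) *
        (((if ¬ clusterRel d α (Set.Iic i) t j l ∧ ¬ clusterRel d α (Set.Iic i) t j 0
            then 1 else 0 : ℝ)) +
         ((if ¬ clusterRel d α (Set.Iic i) t j l ∧ ¬ clusterRel d α (Set.Iic i) t l 0
            then 1 else 0 : ℝ)))
        ≤ ∑ t ∈ S, 2 * (α ^ t * (α - 1)) := by
      apply Finset.sum_le_sum
      intro t _
      have hind : (((if ¬ clusterRel d α (Set.Iic i) t j l ∧ ¬ clusterRel d α (Set.Iic i) t j 0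
            then 1 else 0 : ℝ)) +
         ((if ¬ clusterRel d α (Set.Iic i) t j l ∧ ¬ clusterRel d α (Set.Iic i) t l 0
            then 1 else 0 : ℝ))) ≤ 2 := by
        split_ifs <;> norm_num
      calc (α ^ t * (α - 1)) * _ ≤ (α ^ t * (α - 1)) * 2 :=
            mul_le_mul_of_nonneg_left hind (hw t)
        _ = 2 * (α ^ t * (α - 1)) := mul_comm _ _
    have h3 : ∑ t ∈ S, 2 * (α ^ t * (α - 1)) ≤
        ∑ t ∈ Finset.range (t0 + 1), 2 * (α ^ t * (α - 1)) := by
      apply Finset.sum_le_sum_of_subset_of_nonneg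
      · intro t htS
        exact Finset.mem_range.mpr (Nat.lt_succ_of_le (Finset.le_max' S t htS))
      · intro t _ _
        exact mul_nonneg (by norm_num) (hw t)
    have h4 : ∑ t ∈ Finset.range (t0 + 1), 2 * (α ^ t * (α - 1)) = 2 * (α ^ (t0 + 1) - 1) := by
      rw [← geom_sum_mul α (t0 + 1), Finset.sum_mul, Finset.mul_sum]
    linarith
  · -- Steiner lower bound
    intro E hconn
    have hlead : ∀ j, 1 ≤ j → j ≤ i → ∀ t, t ≤ ρ j → isLeader d α (Set.Iic i) t j :=
      fun j h1 h2 t ht => leader_anti ht (leader_attained (Set.mem_Iic.mpr h2) (hρ j h1 h2))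
    calc (α - 1) * ∑ j ∈ Finset.Icc 1 i, α ^ ρ j
        = ∑ j ∈ Finset.Icc 1 i, α ^ ρ j * (α - 1) := by
          rw [Finset.mul_sum]
          exact Finset.sum_congr rfl fun j _ => mul_comm _ _
      _ ≤ ∑ j ∈ Finset.Icc 1 i, ∑ t ∈ Finset.range (ρ j + 1), α ^ t * (α - 1) := by
          apply Finset.sum_le_sum
          intro j _
          exact Finset.single_le_sum (f := fun t => α ^ t * (α - 1)) (fun t _ => hw t)
            (Finset.self_mem_range_succ (ρ j))
      _ ≤ ∑ j ∈ Finset.Icc 1 i, ∑ t ∈ Finset.range (ρ j + 1),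
            ∑ e ∈ E, zval d α i e.1 e.2 j t := by
          apply Finset.sum_le_sum
          intro j hj
          apply Finset.sum_le_sum
          intro t ht
          rw [Finset.mem_Icc] at hj
          exact cross_bound hα hself hsym htri hmin hj.1 hj.2
            (hlead j hj.1 hj.2 t (Nat.lt_succ_iff.mp (Finset.mem_range.mp ht)))
            (hconn j 0 hj.2 (Nat.zero_le i))
      _ = ∑ e ∈ E, ∑ j ∈ Finset.Icc 1 i, ∑ t ∈ Finset.range (ρ j + 1),
            zval d α i e.1 e.2 j t := by
          rw [← Finset.sum_comm]
          exact Finset.sum_congr rfl fun j _ => Finset.sum_comm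
      _ ≤ ∑ e ∈ E, d e.1 e.2 :=
          Finset.sum_le_sum fun e _ => edge_bound hα hself hsym htri hmin ρ hlead e.1 e.2
end

section
/- Let α ≥ 2 and K ≥ 1. If a tree T on a finite metric space admits an edge partition into levels E¹,…,Eʳ such that for each l, the head j of every component of E¹∪⋯∪Eˡ satisfies b(j) ≥ lK and every edge of Eˡ has length at most 2α^(lK+1), then the total cost of T is at most 2·α^(2K+1)/(α^K - 1) · Σ_{v ≠ 0} α^(b(v)). -/
/-!
Every edge `e` of level `l` is charged to the pair `(j, l)`, where `j` is the head of the
component of `E¹ ∪ ⋯ ∪ Eˡ⁻¹` containing the endpoint of `e` that `e` separates from the root.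
That component avoids `e`, so `j` is not the root and `b(j) ≥ (l - 1)K`; and two distinct edges of
the same level cannot be charged to the same head, since in a tree their far endpoints are not
joined by a walk avoiding both. The cost of `e` is at most `2α^(lK+1)`, and for a fixed head `j`
the levels `l ≤ b(j)/K + 1` contribute a geometric sum of ratio `α^K`, bounded by
`2α^(2K+1)/(α^K - 1) · α^(b(j))`.
-/

open Finset

namespace SimpleGraph

variable {V : Type*} {G : SimpleGraph V}

lemma IsBridge.exists_mem_not_reachable {e : Sym2 V} (he : G.IsBridge e) (u : V) :
    ∃ v ∈ e, ¬ (G.deleteEdges {e}).Reachable u v := by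
  induction e using Sym2.ind with
  | _ x y =>
    by_contra! h
    exact isBridge_iff.mp he ((h x (Sym2.mem_mk_left x y)).symm.trans (h y (Sym2.mem_mk_right x y)))

/-- Both edges lie on a path from `u` to `v₁`; if `v₁ ≠ v₂`, the part of that path up to `v₂`
would avoid `e₁`, and if `v₁ = v₂`, both are its last edge. -/
theorem eq_of_not_reachable_deleteEdges [DecidableEq V] {u v₁ v₂ : V} {e₁ e₂ : Sym2 V}
    (hr : G.Reachable u v₁) (hv₁ : v₁ ∈ e₁) (hv₂ : v₂ ∈ e₂)
    (hcut₁ : ¬ (G.deleteEdges {e₁}).Reachable u v₁)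
    (hcut₂ : ¬ (G.deleteEdges {e₂}).Reachable u v₂)
    (h : (G.deleteEdges {e₁, e₂}).Reachable v₁ v₂) : e₁ = e₂ := by
  obtain ⟨x₁, rfl⟩ := Sym2.mem_iff_exists.mp hv₁
  obtain ⟨x₂, rfl⟩ := Sym2.mem_iff_exists.mp hv₂
  have h₁ : (G.deleteEdges {s(v₁, x₁)}).Reachable v₁ v₂ := h.mono (deleteEdges_anti (by simp))
  have h₂ : (G.deleteEdges {s(v₂, x₂)}).Reachable v₁ v₂ := h.mono (deleteEdges_anti (by simp))
  obtain ⟨p, hp⟩ := hr.exists_isPath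
  have he₁ := p.mem_edges_of_not_reachable_deleteEdges hcut₁
  have he₂ := p.mem_edges_of_not_reachable_deleteEdges fun h' => hcut₂ (h'.trans h₂)
  by_cases hv : v₁ = v₂
  · subst hv
    rw [hp.eq_penultimate_of_mem_edges he₁, hp.eq_penultimate_of_mem_edges he₂]
  · have hv₂p : v₂ ∈ p.support := p.fst_mem_support_of_mem_edges he₂
    have he₁' := (p.takeUntil v₂ hv₂p).mem_edges_of_not_reachable_deleteEdges
      fun h' => hcut₁ (h'.trans h₁.symm)
    exact absurd ((p.takeUntil v₂ hv₂p).fst_mem_support_of_mem_edges he₁')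
      (Walk.endpoint_notMem_support_takeUntil hp hv₂p hv)

def levelForest (T : SimpleGraph V) (lev : Sym2 V → ℕ) (l : ℕ) : SimpleGraph V :=
  fromEdgeSet {e | e ∈ T.edgeSet ∧ lev e ≤ l}

section Heads

variable {T : SimpleGraph V} {root : V} {K r : ℕ} {b : V → ℕ} {lev : Sym2 V → ℕ}

lemma levelForest_le_deleteEdges {l : ℕ} {s : Set (Sym2 V)} (hs : ∀ e ∈ s, l < lev e) :
    T.levelForest lev l ≤ T.deleteEdges s := by
  intro x y hxy
  rw [levelForest, fromEdgeSet_adj] at hxy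
  exact deleteEdges_adj.mpr ⟨hxy.1.1, fun hs' => (hxy.1.2.trans_lt (hs _ hs')).false⟩

def LevelHeadsBounded (T : SimpleGraph V) (lev : Sym2 V → ℕ) (root : V) (b : V → ℕ) (K r : ℕ) :
    Prop :=
  ∀ l : ℕ, 1 ≤ l → l ≤ r → ∀ v : V,
    ∃ j : V, (T.levelForest lev l).Reachable v j ∧ (j = root ∨ l * K ≤ b j)

lemma LevelHeadsBounded.exists_head (hhead : LevelHeadsBounded T lev root b K r) {l : ℕ}
    (hl : l ≤ r) (v : V) :
    ∃ j : V, (T.levelForest lev l).Reachable v j ∧ (j = root ∨ l * K ≤ b j) := by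
  rcases Nat.eq_zero_or_pos l with rfl | hl₀
  · exact ⟨v, .rfl, .inr (by simp)⟩
  · exact hhead l hl₀ hl v

lemma IsAcyclic.exists_head_of_mem_edgeSet (hT : T.IsAcyclic)
    (hhead : LevelHeadsBounded T lev root b K r) {e : Sym2 V} (he : e ∈ T.edgeSet)
    (hlev₁ : 1 ≤ lev e) (hlev_r : lev e ≤ r) :
    ∃ j, j ≠ root ∧ (lev e - 1) * K ≤ b j ∧ ∃ c ∈ e, ¬ (T.deleteEdges {e}).Reachable root c ∧
      (T.levelForest lev (lev e - 1)).Reachable c j := by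
  obtain ⟨c, hce, hcut⟩ := (isAcyclic_iff_forall_isBridge.mp hT he).exists_mem_not_reachable root
  obtain ⟨j, hcj, hj⟩ := hhead.exists_head (by omega : lev e - 1 ≤ r) c
  have hle : T.levelForest lev (lev e - 1) ≤ T.deleteEdges {e} :=
    levelForest_le_deleteEdges (by simp only [Set.mem_singleton_iff, forall_eq]; omega)
  have hj_root : j ≠ root := by
    rintro rfl
    exact hcut (hcj.mono hle).symm
  exact ⟨j, hj_root, hj.resolve_left hj_root, c, hce, hcut, hcj⟩

theorem IsTree.exists_injOn_heads [DecidableEq V] (hT : T.IsTree)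
    (hlev : ∀ e ∈ T.edgeSet, 1 ≤ lev e ∧ lev e ≤ r)
    (hhead : LevelHeadsBounded T lev root b K r) :
    ∃ J : Sym2 V → V, (∀ e ∈ T.edgeSet, J e ≠ root ∧ (lev e - 1) * K ≤ b (J e)) ∧
      Set.InjOn (fun e => (J e, lev e)) T.edgeSet := by
  have : Nonempty V := ⟨root⟩
  choose! J hJ_root hJ_b hJ using
    fun e (he : e ∈ T.edgeSet) =>
      hT.isAcyclic.exists_head_of_mem_edgeSet hhead he (hlev e he).1 (hlev e he).2
  refine ⟨J, fun e he => ⟨hJ_root e he, hJ_b e he⟩, fun e₁ he₁ e₂ he₂ heq => ?_⟩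
  obtain ⟨hJeq, hleveq⟩ := Prod.mk.inj heq
  obtain ⟨c₁, hc₁, hcut₁, hreach₁⟩ := hJ e₁ he₁
  obtain ⟨c₂, hc₂, hcut₂, hreach₂⟩ := hJ e₂ he₂
  rw [← hJeq, ← hleveq] at hreach₂
  have hle : T.levelForest lev (lev e₁ - 1) ≤ T.deleteEdges {e₁, e₂} :=
    levelForest_le_deleteEdges (by
      have := (hlev e₁ he₁).1
      simp only [Set.mem_insert_iff, Set.mem_singleton_iff, forall_eq_or_imp, forall_eq]
      omega)
  exact eq_of_not_reachable_deleteEdges (hT.connected root c₁) hc₁ hc₂ hcut₁ hcut₂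
    ((hreach₁.trans hreach₂.symm).mono hle)

end Heads

end SimpleGraph

lemma sum_range_level_costs_le {α : ℝ} (hα : 1 < α) {K : ℕ} (hK : 0 < K) (n : ℕ) :
    ∑ l ∈ range (n / K + 2), 2 * α ^ (l * K + 1) ≤
      2 * α ^ (2 * K + 1) / (α ^ K - 1) * α ^ n := by
  have hαK : 1 < α ^ K := one_lt_pow₀ hα hK.ne'
  have hpow : (α ^ K) ^ (n / K + 2) ≤ α ^ (n + 2 * K) := by
    rw [← pow_mul]
    refine pow_le_pow_right₀ hα.le ?_
    have := Nat.div_mul_le_self n K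
    nlinarith
  calc ∑ l ∈ range (n / K + 2), 2 * α ^ (l * K + 1)
      = 2 * α * (((α ^ K) ^ (n / K + 2) - 1) / (α ^ K - 1)) := by
        rw [← geom_sum_eq hαK.ne', mul_sum]
        refine sum_congr rfl fun l _ => ?_
        rw [← pow_mul, pow_succ, mul_comm K l]
        ring
    _ ≤ 2 * α * (α ^ (n + 2 * K) / (α ^ K - 1)) := by
        gcongr
        linarith
    _ = 2 * α ^ (2 * K + 1) / (α ^ K - 1) * α ^ n := by ring

lemma sum_level_costs_le {ι V : Type*} [DecidableEq V] {α : ℝ} (hα : 1 < α) {K : ℕ} (hK : 0 < K)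
    {E : Finset ι} {s : Finset V} {lev : ι → ℕ} {b : V → ℕ} {J : ι → V}
    (hJ : ∀ e ∈ E, J e ∈ s) (hb : ∀ e ∈ E, (lev e - 1) * K ≤ b (J e))
    (hinj : Set.InjOn (fun e => (J e, lev e)) E) :
    ∑ e ∈ E, 2 * α ^ (lev e * K + 1) ≤
      2 * α ^ (2 * K + 1) / (α ^ K - 1) * ∑ v ∈ s, α ^ (b v) := by
  rw [mul_sum, ← sum_fiberwise_of_maps_to hJ]
  refine sum_le_sum fun j _ => ?_
  have hlev : Set.InjOn lev ↑{e ∈ E | J e = j} := fun e₁ he₁ e₂ he₂ h => by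
    simp only [coe_filter, Set.mem_ofPred_eq] at he₁ he₂
    exact hinj he₁.1 he₂.1 (by simp [he₁.2, he₂.2, h])
  have hsub : {e ∈ E | J e = j}.image lev ⊆ range (b j / K + 2) := by
    simp only [subset_iff, mem_image, mem_filter, mem_range]
    rintro _ ⟨e, ⟨he, rfl⟩, rfl⟩
    have := (Nat.le_div_iff_mul_le hK).mpr (hb e he)
    omega
  calc ∑ e ∈ E with J e = j, 2 * α ^ (lev e * K + 1)
      = ∑ l ∈ {e ∈ E | J e = j}.image lev, 2 * α ^ (l * K + 1) := by rw [sum_image hlev]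
    _ ≤ ∑ l ∈ range (b j / K + 2), 2 * α ^ (l * K + 1) :=
        sum_le_sum_of_subset_of_nonneg hsub fun _ _ _ => by positivity
    _ ≤ _ := sum_range_level_costs_le hα hK (b j)

theorem stmt_17 (V : Type*) [Fintype V] [DecidableEq V] [MetricSpace V]
    (root : V) (α : ℝ) (hα : 2 ≤ α) (K : ℕ) (hK : 1 ≤ K) (b : V → ℕ)
    (T : SimpleGraph V) [DecidableRel T.Adj] (hT : T.IsTree)
    (r : ℕ) (lev : Sym2 V → ℕ)
    (hlev : ∀ e ∈ T.edgeSet, 1 ≤ lev e ∧ lev e ≤ r)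
    -- (i): the head of each component of the first l levels has b-value ≥ lK
    (hhead : ∀ l : ℕ, 1 ≤ l → l ≤ r → ∀ v : V,
      ∃ j : V, (SimpleGraph.fromEdgeSet {e | e ∈ T.edgeSet ∧ lev e ≤ l}).Reachable v j ∧
        (j = root ∨ l * K ≤ b j))
    -- (ii): edges at level l have length at most 2α^(lK+1)
    (hlen : ∀ u w : V, T.Adj u w → dist u w ≤ 2 * α ^ (lev s(u, w) * K + 1)) :
    ∑ e ∈ T.edgeFinset, edgeLen V e ≤
      (2 * α ^ (2 * K + 1) / (α ^ K - 1)) * ∑ v ∈ Finset.univ.erase root, α ^ (b v) := by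
  obtain ⟨J, hJ, hinj⟩ := hT.exists_injOn_heads hlev hhead
  calc ∑ e ∈ T.edgeFinset, edgeLen V e ≤ ∑ e ∈ T.edgeFinset, 2 * α ^ (lev e * K + 1) := by
        refine sum_le_sum fun e he => ?_
        induction e using Sym2.ind with
        | _ u w => exact hlen u w (SimpleGraph.mem_edgeFinset.mp he)
    _ ≤ _ := by
        refine sum_level_costs_le (J := J) (by linarith) hK (fun e he => ?_) (fun e he => ?_) ?_
        · exact mem_erase.mpr ⟨(hJ e (SimpleGraph.mem_edgeFinset.mp he)).1, mem_univ _⟩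
        · exact (hJ e (SimpleGraph.mem_edgeFinset.mp he)).2
        · simpa using hinj
end

section
/- Let h₁ ≥ h₂ ≥ ⋯ ≥ h_n be the greedy connection costs (sorted decreasingly) of n points arriving in a metric space containing a root, where each point's greedy cost is its distance to the nearest earlier point. For 1 ≤ i ≤ n, let Δ_i be the smallest D such that the n+1 points can be partitioned into i parts each of diameter at most D. Then h_i ≤ Δ_i for every i. -/
/-- The greedy connection cost of the `j`-th arriving point (`j ≥ 1`): its distance
to the nearest earlier point (the root is `p 0`). -/
noncomputable def greedyCost {X : Type*} [MetricSpace X] (p : ℕ → X) (j : ℕ) : ℝ :=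
  sInf ((fun m => dist (p m) (p j)) '' Set.Iio j)

lemma greedyCost_le {X : Type*} [MetricSpace X] (p : ℕ → X) {m j : ℕ} (hm : m < j) :
    greedyCost p j ≤ dist (p m) (p j) := by
  apply csInf_le
  · exact ⟨0, fun x hx => by rcases hx with ⟨k, _, rfl⟩; positivity⟩
  · exact ⟨m, hm, rfl⟩

/-- If `h 1 ≥ h 2 ≥ ⋯ ≥ h n` are the greedy connection costs sorted decreasingly,
and the `n+1` points (root included) can be partitioned into `i` parts each of
diameter at most `D`, then `h i ≤ D`; in particular `h i ≤ Δ i`. -/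
theorem stmt_19 (X : Type*) [MetricSpace X] (n : ℕ) (p : ℕ → X)
    (h : ℕ → ℝ) (σ : Equiv.Perm (Fin n))
    (hperm : ∀ j : Fin n, h ((j : ℕ) + 1) = greedyCost p ((σ j : ℕ) + 1))
    (hsort : ∀ j j' : Fin n, j ≤ j' → h ((j' : ℕ) + 1) ≤ h ((j : ℕ) + 1)) :
    ∀ i : Fin n, ∀ D : ℝ,
      (∃ parts : Fin (n + 1) → Fin ((i : ℕ) + 1),
        ∀ x y : Fin (n + 1), parts x = parts y → dist (p x) (p y) ≤ D) →
      h ((i : ℕ) + 1) ≤ D := by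
  rintro i D ⟨parts, hparts⟩
  have hle : (i : ℕ) + 1 ≤ n := i.2
  -- the i+2 candidate points: root and σ(j)+1 for j ≤ i
  set F : Fin ((i : ℕ) + 2) → Fin (n + 1) :=
    fun k => Fin.cases 0 (fun j => (σ (Fin.castLE hle j)).succ) k with hF
  have : ¬ Function.Injective (parts ∘ F) := by
    intro hinj
    have := Fintype.card_le_of_injective _ hinj
    simp at this
  rw [Function.not_injective_iff] at this
  obtain ⟨k, k', heq, hne⟩ := this
  have hdist : dist (p (F k)) (p (F k')) ≤ D := hparts _ _ heq
  -- key: for j : Fin (i+1), h(j'+1) pieces dominate h(i+1)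
  have key : ∀ (j : Fin ((i : ℕ) + 1)) (m : ℕ),
      m < (σ (Fin.castLE hle j) : ℕ) + 1 →
      dist (p m) (p ((σ (Fin.castLE hle j) : ℕ) + 1)) ≤ D → h ((i : ℕ) + 1) ≤ D := by
    intro j m hm hd
    have h1 : h ((j : ℕ) + 1) ≤ D := by
      rw [show ((j : ℕ) : ℕ) = ((Fin.castLE hle j : Fin n) : ℕ) from rfl, hperm]
      exact le_trans (greedyCost_le p hm) hd
    have h2 : h ((i : ℕ) + 1) ≤ h ((j : ℕ) + 1) := by
      have := hsort (Fin.castLE hle j) i (by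
        simp [Fin.le_def]
        omega)
      simpa using this
    linarith
  -- case analysis on k, k'
  induction k using Fin.cases with
  | zero =>
    induction k' using Fin.cases with
    | zero => exact absurd rfl hne
    | succ j' =>
      refine key j' 0 (by omega) ?_
      simpa [hF, Fin.succ] using hdist
  | succ j =>
    induction k' using Fin.cases with
    | zero =>
      refine key j 0 (by omega) ?_
      rw [dist_comm] at hdist
      simpa [hF, Fin.succ] using hdist
    | succ j' =>
      set a := (σ (Fin.castLE hle j) : ℕ) with ha
      set b := (σ (Fin.castLE hle j') : ℕ) with hb
      have hab : a ≠ b := by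
        intro hcontra
        apply hne
        have e1 : σ (Fin.castLE hle j) = σ (Fin.castLE hle j') := by
          apply Fin.ext; exact hcontra
        have e2 : Fin.castLE hle j = Fin.castLE hle j' := σ.injective e1
        have e3 : j = j' := by
          have := congrArg Fin.val e2
          exact Fin.ext this
        rw [e3]
      have hdist' : dist (p (a + 1)) (p (b + 1)) ≤ D := by
        simpa [hF, Fin.succ, ha, hb] using hdist
      rcases lt_or_gt_of_ne hab with hlt | hgt
      · exact key j' (a + 1) (by omega) hdist'
      · refine key j (b + 1) (by omega) ?_
        rw [dist_comm]; exact hdist'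
end
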